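/- arXiv:2210.08082 — 5 statements merged into one kernel-verified Lean document; each statement's English description precedes it below -/
import Mathlib

section
/- Every polytope in ℝⁿ is triangulable: if P ⊆ ℝⁿ is a nonempty finite union of geometric simplices, then there exists a finite geometric simplicial complex K in ℝⁿ whose underlying space equals P. -/
open Finset Set Bornology

namespace PolyTri

variable {E ι : Type*} [NormedAddCommGroup E] [NormedSpace ℝ E]

/-- The sign vector of a point with respect to a family of affine functionals. -/
noncomputable def sg (F : ι → (E →ᵃ[ℝ] ℝ)) (x : E) : ι → SignType := fun i => SignType.sign (F i x)

/-- Face order on sign vectors. -/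
def vle (ε δ : ι → SignType) : Prop := ∀ i, ε i = 0 ∨ ε i = δ i

lemma vle_refl (ε : ι → SignType) : vle ε ε := fun i => Or.inr rfl

lemma vle_trans {ε δ γ : ι → SignType} (h1 : vle ε δ) (h2 : vle δ γ) : vle ε γ := by
  intro i
  rcases h1 i with h | h
  · exact Or.inl h
  · rcases h2 i with h' | h'
    · exact Or.inl (h.trans h')
    · exact Or.inr (h.trans h')

lemma vle_antisymm {ε δ : ι → SignType} (h1 : vle ε δ) (h2 : vle δ ε) : ε = δ := by
  funext i
  rcases h1 i with h | h
  · rcases h2 i with h' | h'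
    · rw [h, h']
    · exact h'.symm
  · exact h

/-- Compatibility of a real number with a prescribed sign. -/
def scompat (e : SignType) (r : ℝ) : Prop := SignType.sign r = 0 ∨ SignType.sign r = e

lemma scompat_zero {r : ℝ} : scompat SignType.zero r ↔ r = 0 := by
  unfold scompat
  rw [SignType.zero_eq_zero, or_self, sign_eq_zero_iff]

lemma scompat_pos {r : ℝ} : scompat SignType.pos r ↔ 0 ≤ r := by
  unfold scompat
  rw [SignType.pos_eq_one, sign_eq_zero_iff, sign_eq_one_iff]
  constructor
  · rintro (h | h)
    · exact h.ge
    · exact h.le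
  · intro h
    rcases h.eq_or_lt with h' | h'
    · exact Or.inl h'.symm
    · exact Or.inr h'

lemma scompat_neg {r : ℝ} : scompat SignType.neg r ↔ r ≤ 0 := by
  unfold scompat
  rw [SignType.neg_eq_neg_one, sign_eq_zero_iff, sign_eq_neg_one_iff]
  constructor
  · rintro (h | h)
    · exact h.le
    · exact h.le
  · intro h
    rcases h.eq_or_lt with h' | h'
    · exact Or.inl h'
    · exact Or.inr h'

lemma vle_sg_iff {F : ι → (E →ᵃ[ℝ] ℝ)} {x : E} {ε : ι → SignType} :
    vle (sg F x) ε ↔ ∀ i, scompat (ε i) (F i x) := Iff.rfl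

lemma apply_eq (f : E →ᵃ[ℝ] ℝ) (v : E) : f v = f.linear v + f 0 := by
  conv_lhs => rw [f.decomp]
  rfl

lemma linear_eq (f : E →ᵃ[ℝ] ℝ) (v : E) : f.linear v = f v - f 0 := by
  rw [apply_eq f v]; ring

/-- Applying an affine functional to an affine combination (weights summing to 1). -/
lemma apply_sum {α : Type*} (f : E →ᵃ[ℝ] ℝ) (t : Finset α) (w : α → ℝ) (p : α → E)
    (hw : ∑ y ∈ t, w y = 1) :
    f (∑ y ∈ t, w y • p y) = ∑ y ∈ t, w y * f (p y) := by
  rw [apply_eq, map_sum]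
  simp_rw [map_smul, smul_eq_mul, linear_eq]
  rw [Finset.sum_congr rfl fun y _ => mul_sub (w y) (f (p y)) (f 0),
    Finset.sum_sub_distrib, ← Finset.sum_mul, hw, one_mul, sub_add_cancel]

/-- Applying an affine functional to a linear combination with weights summing to 0. -/
lemma apply_sum₀ {α : Type*} (f : E →ᵃ[ℝ] ℝ) (t : Finset α) (w : α → ℝ) (p : α → E)
    (hw : ∑ y ∈ t, w y = 0) (hp : ∑ y ∈ t, w y • p y = 0) :
    ∑ y ∈ t, w y * f (p y) = 0 := by
  have key : f.linear (∑ y ∈ t, w y • p y) = ∑ y ∈ t, w y * f.linear (p y) := by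
    rw [map_sum]; simp_rw [map_smul, smul_eq_mul]
  rw [hp, map_zero] at key
  calc ∑ y ∈ t, w y * f (p y)
      = ∑ y ∈ t, (w y * f.linear (p y) + w y * f 0) := by
        refine Finset.sum_congr rfl fun y _ => ?_
        rw [linear_eq]; ring
    _ = 0 := by
        rw [Finset.sum_add_distrib, ← key.symm, ← Finset.sum_mul, hw, zero_mul,
          add_zero, ← key]

lemma apply_combo2 (f : E →ᵃ[ℝ] ℝ) {a b : ℝ} (hab : a + b = 1) (x y : E) :
    f (a • x + b • y) = a * f x + b * f y := by
  rw [apply_eq, map_add, map_smul, map_smul]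
  simp only [smul_eq_mul]
  rw [linear_eq f x, linear_eq f y]
  have hb : b = 1 - a := by linarith
  subst hb; ring

lemma sum_scompat {α : Type*} {t : Finset α} {w f : α → ℝ} {e : SignType}
    (hw : ∀ y ∈ t, 0 ≤ w y) (h : ∀ y ∈ t, scompat e (f y)) :
    scompat e (∑ y ∈ t, w y * f y) := by
  cases e with
  | zero =>
    rw [scompat_zero]
    exact Finset.sum_eq_zero fun y hy => by rw [scompat_zero.1 (h y hy), mul_zero]
  | pos =>
    rw [scompat_pos]
    exact Finset.sum_nonneg fun y hy => mul_nonneg (hw y hy) (scompat_pos.1 (h y hy))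
  | neg =>
    rw [scompat_neg]
    exact Finset.sum_nonpos fun y hy =>
      mul_nonpos_iff.2 (Or.inl ⟨hw y hy, scompat_neg.1 (h y hy)⟩)

lemma sum_sign {α : Type*} {t : Finset α} {w f : α → ℝ} {e : SignType}
    (hw : ∀ y ∈ t, 0 ≤ w y) (h : ∀ y ∈ t, scompat e (f y))
    {y0 : α} (hy0 : y0 ∈ t) (hw0 : 0 < w y0) (hs0 : SignType.sign (f y0) = e) :
    SignType.sign (∑ y ∈ t, w y * f y) = e := by
  cases e with
  | zero =>
    rw [SignType.zero_eq_zero, sign_eq_zero_iff]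
    exact Finset.sum_eq_zero fun y hy => by rw [scompat_zero.1 (h y hy), mul_zero]
  | pos =>
    rw [SignType.pos_eq_one, sign_eq_one_iff]
    refine Finset.sum_pos' (fun y hy => mul_nonneg (hw y hy) (scompat_pos.1 (h y hy))) ?_
    refine ⟨y0, hy0, mul_pos hw0 ?_⟩
    rw [SignType.pos_eq_one, sign_eq_one_iff] at hs0
    exact hs0
  | neg =>
    rw [SignType.neg_eq_neg_one, sign_eq_neg_one_iff]
    have h0 : 0 < ∑ y ∈ t, w y * -f y := by
      refine Finset.sum_pos' (fun y hy => mul_nonneg (hw y hy) ?_) ⟨y0, hy0, mul_pos hw0 ?_⟩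
      · rw [neg_nonneg]
        exact scompat_neg.1 (h y hy)
      · rw [neg_pos]
        rw [SignType.neg_eq_neg_one, sign_eq_neg_one_iff] at hs0
        exact hs0
    have heq : ∑ y ∈ t, w y * -f y = -∑ y ∈ t, w y * f y := by
      simp [mul_neg]
    rw [heq] at h0
    linarith

end PolyTri
section Part2

open Finset Set Bornology

namespace PolyTri

variable {E ι : Type*} [NormedAddCommGroup E] [NormedSpace ℝ E]

open Classical in
/-- A choice of reference point in each nonempty open cell meeting `P`. -/
noncomputable def pt (F : ι → (E →ᵃ[ℝ] ℝ)) (P : Set E) (ε : ι → SignType) : E :=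
  if h : ∃ x ∈ P, sg F x = ε then h.choose else 0

lemma pt_spec {F : ι → (E →ᵃ[ℝ] ℝ)} {P : Set E} {x : E} (hx : x ∈ P) :
    pt F P (sg F x) ∈ P ∧ sg F (pt F P (sg F x)) = sg F x := by
  have h : ∃ y ∈ P, sg F y = sg F x := ⟨x, hx, rfl⟩
  rw [pt]
  rw [dif_pos h]
  exact ⟨h.choose_spec.1, h.choose_spec.2⟩

/-- Vertices of the triangulation. -/
def isVert (F : ι → (E →ᵃ[ℝ] ℝ)) (P : Set E) (x : E) : Prop :=
  x ∈ P ∧ pt F P (sg F x) = x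

/-- Faces of the triangulation: finite chains of cell reference points. -/
def faces (F : ι → (E →ᵃ[ℝ] ℝ)) (P : Set E) : Set (Finset E) :=
  {t | t.Nonempty ∧ (∀ x ∈ t, isVert F P x) ∧
    ∀ x ∈ t, ∀ y ∈ t, vle (sg F x) (sg F y) ∨ vle (sg F y) (sg F x)}

variable {F : ι → (E →ᵃ[ℝ] ℝ)} {P : Set E}

lemma faces_mono {t u : Finset E} (ht : t ∈ faces F P) (hut : u ⊆ t) (hu : u.Nonempty) :
    u ∈ faces F P :=
  ⟨hu, fun x hx => ht.2.1 x (hut hx), fun x hx y hy => ht.2.2 x (hut hx) y (hut hy)⟩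

lemma face_inj {t : Finset E} (ht : t ∈ faces F P) {x y : E} (hx : x ∈ t) (hy : y ∈ t)
    (h : sg F x = sg F y) : x = y := by
  have h1 := (ht.2.1 x hx).2
  have h2 := (ht.2.1 y hy).2
  rw [← h1, ← h2, h]

/-- Every nonempty finite pairwise-`vle`-comparable family has a top element. -/
lemma exists_top {α : Type*} (g : α → (ι → SignType)) (t : Finset α) (hne : t.Nonempty)
    (hcomp : ∀ x ∈ t, ∀ y ∈ t, vle (g x) (g y) ∨ vle (g y) (g x)) :
    ∃ z ∈ t, ∀ y ∈ t, vle (g y) (g z) := by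
  classical
  induction t using Finset.induction_on with
  | empty => exact absurd hne (by simp)
  | @insert a s ha IH =>
    rcases s.eq_empty_or_nonempty with rfl | hs
    · exact ⟨a, Finset.mem_insert_self _ _, by
        intro y hy
        rcases Finset.mem_insert.1 hy with rfl | h
        · exact vle_refl _
        · exact absurd h (by simp)⟩
    · obtain ⟨z, hz, hztop⟩ := IH hs (fun x hx y hy =>
        hcomp x (Finset.mem_insert_of_mem hx) y (Finset.mem_insert_of_mem hy))
      rcases hcomp a (Finset.mem_insert_self a s) z (Finset.mem_insert_of_mem hz) with h | h
      · refine ⟨z, Finset.mem_insert_of_mem hz, fun y hy => ?_⟩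
        rcases Finset.mem_insert.1 hy with rfl | h'
        · exact h
        · exact hztop y h'
      · refine ⟨a, Finset.mem_insert_self a s, fun y hy => ?_⟩
        rcases Finset.mem_insert.1 hy with rfl | h'
        · exact vle_refl _
        · exact vle_trans (hztop y h') h

lemma exists_sep {ε δ : ι → SignType} (h : vle ε δ) (hne : ε ≠ δ) :
    ∃ i, ε i = 0 ∧ δ i ≠ 0 := by
  obtain ⟨i, hi⟩ := Function.ne_iff.1 hne
  rcases h i with h0 | he
  · exact ⟨i, h0, fun hd => hi (by rw [h0, hd])⟩
  · exact absurd he hi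

/-- The sign vector of a positive convex combination along a chain is the sign vector of
the top element of the chain. -/
lemma sign_combo {t : Finset E} {w : E → ℝ} (hw : ∀ y ∈ t, 0 < w y)
    (hw1 : ∑ y ∈ t, w y = 1) {z : E} (hz : z ∈ t)
    (htop : ∀ y ∈ t, vle (sg F y) (sg F z)) :
    sg F (∑ y ∈ t, w y • y) = sg F z := by
  funext i
  show SignType.sign (F i (∑ y ∈ t, w y • y)) = sg F z i
  rw [apply_sum (F i) t w (fun y => y) hw1]
  exact sum_sign (f := fun y => F i y) (fun y hy => (hw y hy).le)
    (fun y hy => htop y hy i) hz (hw z hz) rfl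

/-- Weak version: nonnegative combinations stay `vle`-below the top. -/
lemma vle_combo {t : Finset E} {w : E → ℝ} (hw : ∀ y ∈ t, 0 ≤ w y)
    (hw1 : ∑ y ∈ t, w y = 1) {z : E}
    (htop : ∀ y ∈ t, vle (sg F y) (sg F z)) :
    vle (sg F (∑ y ∈ t, w y • y)) (sg F z) := by
  intro i
  show scompat (sg F z i) (F i (∑ y ∈ t, w y • y))
  rw [apply_sum (F i) t w (fun y => y) hw1]
  exact sum_scompat (f := fun y => F i y) hw (fun y hy => htop y hy i)

/-- If a positive combination over a face equals the top vertex, the face is a singleton. -/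
lemma eq_singleton_top {t : Finset E} (ht : t ∈ faces F P) {w : E → ℝ}
    (hw : ∀ y ∈ t, 0 < w y) (hw1 : ∑ y ∈ t, w y = 1) {z : E} (hz : z ∈ t)
    (htop : ∀ y ∈ t, vle (sg F y) (sg F z)) (hx : ∑ y ∈ t, w y • y = z) :
    t = {z} := by
  classical
  by_contra hne
  have herase : (t.erase z).Nonempty := by
    rw [Finset.nonempty_iff_ne_empty]
    intro h
    rcases (Finset.erase_eq_empty_iff t z).1 h with h' | h'
    · exact ht.1.ne_empty h'
    · exact hne h'
  obtain ⟨y1, hy1, hy1top⟩ := exists_top (sg F) (t.erase z) herase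
    (fun x hx y hy => ht.2.2 x (Finset.erase_subset _ _ hx) y (Finset.erase_subset _ _ hy))
  have hy1t : y1 ∈ t := Finset.erase_subset _ _ hy1
  have hy1ne : sg F y1 ≠ sg F z := fun h =>
    (Finset.mem_erase.1 hy1).1 (face_inj ht hy1t hz h)
  obtain ⟨i, hi0, hiz⟩ := exists_sep (htop y1 hy1t) hy1ne
  have hcalc : F i z = w z * F i z := by
    conv_lhs => rw [← hx]
    rw [apply_sum (F i) t w (fun y => y) hw1]
    refine Finset.sum_eq_single_of_mem z hz fun y hy hyz => ?_
    have hvle := hy1top y (Finset.mem_erase.2 ⟨hyz, hy⟩)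
    have : sg F y i = 0 := by
      rcases hvle i with h | h
      · exact h
      · rw [h, hi0]
    rw [sign_eq_zero_iff.1 this, mul_zero]
  have hFz : F i z ≠ 0 := fun h => hiz (by rw [show sg F z i = SignType.sign (F i z) from rfl, h, sign_zero])
  have hwz : w z = 1 := by
    have : (1 - w z) * F i z = 0 := by linarith [hcalc]
    rcases mul_eq_zero.1 this with h | h
    · linarith
    · exact absurd h hFz
  have hsum : ∑ y ∈ t.erase z, w y = 0 := by
    have := Finset.sum_erase_add t w hz
    rw [hw1] at this
    linarith [this, hwz]
  have hpos : 0 < ∑ y ∈ t.erase z, w y :=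
    Finset.sum_pos (fun y hy => hw y (Finset.erase_subset _ _ hy)) herase
  linarith

/-- Faces are affinely independent. -/
lemma faces_indep {t : Finset E} (ht : t ∈ faces F P) :
    AffineIndependent ℝ ((↑) : t → E) := by
  classical
  rw [affineIndependent_iff]
  intro s w hw0 hcomb e he
  by_contra hne
  set supp : Finset ↥t := s.filter (fun a => w a ≠ 0) with hsupp
  have hsubs : supp ⊆ s := Finset.filter_subset _ _
  have hsne : supp.Nonempty := ⟨e, Finset.mem_filter.2 ⟨he, hne⟩⟩
  obtain ⟨z, hzsupp, hztop⟩ := exists_top (fun a : ↥t => sg F ↑a) supp hsne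
    (fun x _ y _ => ht.2.2 ↑x x.2 ↑y y.2)
  have hwz : w z ≠ 0 := (Finset.mem_filter.1 hzsupp).2
  rcases (supp.erase z).eq_empty_or_nonempty with herase | herase
  · -- supp = {z} : sum of weights is w z = 0, contradiction
    have hsupz : supp = {z} := by
      rcases (Finset.erase_eq_empty_iff supp z).1 herase with h | h
      · exact absurd h hsne.ne_empty
      · exact h
    have : ∑ a ∈ s, w a = w z := by
      rw [← Finset.sum_filter_of_ne (p := fun a => w a ≠ 0) (fun x _ h => h), ← hsupp, hsupz,
        Finset.sum_singleton]
    rw [hw0] at this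
    exact hwz this.symm
  · obtain ⟨y1, hy1, hy1top⟩ := exists_top (fun a : ↥t => sg F ↑a) (supp.erase z) herase
      (fun x _ y _ => ht.2.2 ↑x x.2 ↑y y.2)
    have hy1ne : sg F ↑y1 ≠ sg F ↑z := by
      intro h
      have : (y1 : E) = ↑z := face_inj ht y1.2 z.2 h
      exact (Finset.mem_erase.1 hy1).1 (Subtype.ext this)
    obtain ⟨i, hi0, hiz⟩ := exists_sep (hztop y1 (Finset.erase_subset _ _ hy1)) hy1ne
    have h0 : ∑ a ∈ s, w a * F i ↑a = 0 := apply_sum₀ (F i) s w (fun a => ↑a) hw0 hcomb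
    have h1 : ∑ a ∈ s, w a * F i ↑a = ∑ a ∈ supp, w a * F i ↑a := by
      rw [← Finset.sum_filter_of_ne (p := fun a => w a ≠ 0)
        (fun x _ h => by
          intro hw
          exact h (by rw [hw, zero_mul]))]
    have h2 : ∑ a ∈ supp, w a * F i ↑a = w z * F i ↑z := by
      refine Finset.sum_eq_single_of_mem z hzsupp fun a ha haz => ?_
      have hvle := hy1top a (Finset.mem_erase.2 ⟨haz, ha⟩)
      have : sg F ↑a i = 0 := by
        rcases hvle i with h | h
        · exact h
        · rw [h, hi0]
      rw [sign_eq_zero_iff.1 this, mul_zero]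
    have hFz : F i ↑z ≠ 0 := fun h =>
      hiz (by rw [show sg F ↑z i = SignType.sign (F i ↑z) from rfl, h, sign_zero])
    rw [h1, h2] at h0
    rcases mul_eq_zero.1 h0 with h | h
    · exact hwz h
    · exact hFz h

end PolyTri

end Part2
section Part3

open Finset Set Bornology

namespace PolyTri

variable {E ι : Type*} [NormedAddCommGroup E] [NormedSpace ℝ E]
variable {F : ι → (E →ᵃ[ℝ] ℝ)} {P : Set E}

set_option maxHeartbeats 1000000 in
lemma inter_key (N : ℕ) :
    ∀ (t1 t2 : Finset E), t1 ∈ faces F P → t2 ∈ faces F P → t1.card + t2.card ≤ N →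
    ∀ (x : E) (w1 w2 : E → ℝ),
      (∀ y ∈ t1, 0 < w1 y) → (∑ y ∈ t1, w1 y = 1) → (∑ y ∈ t1, w1 y • y = x) →
      (∀ y ∈ t2, 0 < w2 y) → (∑ y ∈ t2, w2 y = 1) → (∑ y ∈ t2, w2 y • y = x) →
      x ∈ convexHull ℝ ((↑t1 ∩ ↑t2 : Set E)) := by
  classical
  induction N with
  | zero =>
    intro t1 t2 ht1 _ hcard _ _ _ _ _ _ _ _ _
    have := Finset.card_pos.2 ht1.1
    omega
  | succ N IH =>
    intro t1 t2 ht1 ht2 hcard x w1 w2 hw1 hw1s hx1 hw2 hw2s hx2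
    obtain ⟨z1, hz1, htop1⟩ := exists_top (sg F) t1 ht1.1 ht1.2.2
    obtain ⟨z2, hz2, htop2⟩ := exists_top (sg F) t2 ht2.1 ht2.2.2
    have hsgx1 : sg F x = sg F z1 := by rw [← hx1]; exact sign_combo hw1 hw1s hz1 htop1
    have hsgx2 : sg F x = sg F z2 := by rw [← hx2]; exact sign_combo hw2 hw2s hz2 htop2
    have hz12 : z1 = z2 := by
      have e1 := (ht1.2.1 z1 hz1).2
      have e2 := (ht2.2.1 z2 hz2).2
      rw [← e1, ← e2, ← hsgx1, ← hsgx2]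
    set z := z1 with hzdef
    have hz2' : z ∈ t2 := by rw [hz12]; exact hz2
    have htop2' : ∀ y ∈ t2, vle (sg F y) (sg F z) := by rw [hz12]; exact htop2
    have hzmem : z ∈ (↑t1 ∩ ↑t2 : Set E) := ⟨hz1, hz2'⟩
    by_cases ht1s : t1 = {z}
    · -- x = z, and then t2 = {z}
      have hx : x = z := by
        rw [← hx1, ht1s, Finset.sum_singleton]
        have : w1 z = 1 := by
          have := hw1s; rw [ht1s, Finset.sum_singleton] at this; exact this
        rw [this, one_smul]
      rw [hx]
      exact subset_convexHull ℝ _ hzmem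
    by_cases ht2s : t2 = {z}
    · have hx : x = z := by
        rw [← hx2, ht2s, Finset.sum_singleton]
        have : w2 z = 1 := by
          have := hw2s; rw [ht2s, Finset.sum_singleton] at this; exact this
        rw [this, one_smul]
      rw [hx]
      exact subset_convexHull ℝ _ hzmem
    -- main case
    have he1 : (t1.erase z).Nonempty := by
      rw [Finset.nonempty_iff_ne_empty]
      intro h
      rcases (Finset.erase_eq_empty_iff t1 z).1 h with h' | h'
      · exact ht1.1.ne_empty h'
      · exact ht1s h'
    have he2 : (t2.erase z).Nonempty := by
      rw [Finset.nonempty_iff_ne_empty]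
      intro h
      rcases (Finset.erase_eq_empty_iff t2 z).1 h with h' | h'
      · exact ht2.1.ne_empty h'
      · exact ht2s h'
    obtain ⟨a1, ha1def⟩ : ∃ v : ℝ, v = w1 z := ⟨_, rfl⟩
    obtain ⟨a2, ha2def⟩ : ∃ v : ℝ, v = w2 z := ⟨_, rfl⟩
    obtain ⟨b1, hb1def⟩ : ∃ v : ℝ, v = ∑ y ∈ t1.erase z, w1 y := ⟨_, rfl⟩
    obtain ⟨b2, hb2def⟩ : ∃ v : ℝ, v = ∑ y ∈ t2.erase z, w2 y := ⟨_, rfl⟩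
    have hab1 : b1 + a1 = 1 := by
      rw [hb1def, ha1def, Finset.sum_erase_add t1 w1 hz1]; exact hw1s
    have hab2 : b2 + a2 = 1 := by
      rw [hb2def, ha2def, Finset.sum_erase_add t2 w2 hz2']; exact hw2s
    have hb1pos : 0 < b1 := by
      rw [hb1def]
      exact Finset.sum_pos (fun y hy => hw1 y (Finset.erase_subset _ _ hy)) he1
    have hb2pos : 0 < b2 := by
      rw [hb2def]
      exact Finset.sum_pos (fun y hy => hw2 y (Finset.erase_subset _ _ hy)) he2
    obtain ⟨w1', hw1'def⟩ : ∃ v : E → ℝ, v = fun y => b1⁻¹ * w1 y := ⟨_, rfl⟩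
    obtain ⟨w2', hw2'def⟩ : ∃ v : E → ℝ, v = fun y => b2⁻¹ * w2 y := ⟨_, rfl⟩
    obtain ⟨x1, hx1def⟩ : ∃ v : E, v = ∑ y ∈ t1.erase z, w1' y • y := ⟨_, rfl⟩
    obtain ⟨x2, hx2def⟩ : ∃ v : E, v = ∑ y ∈ t2.erase z, w2' y • y := ⟨_, rfl⟩
    have hw1's : ∑ y ∈ t1.erase z, w1' y = 1 := by
      rw [hw1'def]
      rw [← Finset.mul_sum, ← hb1def, inv_mul_cancel₀ hb1pos.ne']
    have hw2's : ∑ y ∈ t2.erase z, w2' y = 1 := by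
      rw [hw2'def]
      rw [← Finset.mul_sum, ← hb2def, inv_mul_cancel₀ hb2pos.ne']
    have hsmul1 : b1 • x1 = ∑ y ∈ t1.erase z, w1 y • y := by
      rw [hx1def, Finset.smul_sum]
      refine Finset.sum_congr rfl fun y _ => ?_
      rw [hw1'def, smul_smul, mul_inv_cancel_left₀ hb1pos.ne']
    have hsmul2 : b2 • x2 = ∑ y ∈ t2.erase z, w2 y • y := by
      rw [hx2def, Finset.smul_sum]
      refine Finset.sum_congr rfl fun y _ => ?_
      rw [hw2'def, smul_smul, mul_inv_cancel_left₀ hb2pos.ne']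
    have hsplit1 : x = a1 • z + b1 • x1 := by
      rw [← hx1, ← Finset.add_sum_erase t1 _ hz1, ← hsmul1, ha1def]
    have hsplit2 : x = a2 • z + b2 • x2 := by
      rw [← hx2, ← Finset.add_sum_erase t2 _ hz2', ← hsmul2, ha2def]
    -- compare coefficients using separating indices
    obtain ⟨ζ1, hζ1, hζ1top⟩ := exists_top (sg F) (t1.erase z) he1
      (fun u hu v hv => ht1.2.2 u (Finset.erase_subset _ _ hu) v (Finset.erase_subset _ _ hv))
    obtain ⟨ζ2, hζ2, hζ2top⟩ := exists_top (sg F) (t2.erase z) he2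
      (fun u hu v hv => ht2.2.2 u (Finset.erase_subset _ _ hu) v (Finset.erase_subset _ _ hv))
    obtain ⟨i1, hi10, hi1z⟩ := exists_sep (htop1 ζ1 (Finset.erase_subset _ _ hζ1))
      (fun h => (Finset.mem_erase.1 hζ1).1 (face_inj ht1 (Finset.erase_subset _ _ hζ1) hz1 h))
    obtain ⟨i2, hi20, hi2z⟩ := exists_sep (htop2' ζ2 (Finset.erase_subset _ _ hζ2))
      (fun h => (Finset.mem_erase.1 hζ2).1 (face_inj ht2 (Finset.erase_subset _ _ hζ2) hz2' h))
    have hx1vanish : ∀ i : ι, sg F ζ1 i = 0 → F i x1 = 0 := by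
      intro i hi
      rw [hx1def, apply_sum (F i) _ w1' (fun y => y) hw1's]
      refine Finset.sum_eq_zero fun y hy => ?_
      have : sg F y i = 0 := by
        rcases hζ1top y hy i with h | h
        · exact h
        · rw [h, hi]
      rw [sign_eq_zero_iff.1 this, mul_zero]
    have hx2vanish : ∀ i : ι, sg F ζ2 i = 0 → F i x2 = 0 := by
      intro i hi
      rw [hx2def, apply_sum (F i) _ w2' (fun y => y) hw2's]
      refine Finset.sum_eq_zero fun y hy => ?_
      have : sg F y i = 0 := by
        rcases hζ2top y hy i with h | h
        · exact h
        · rw [h, hi]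
      rw [sign_eq_zero_iff.1 this, mul_zero]
    have hx1compat : ∀ i : ι, scompat (sg F z i) (F i x1) := by
      intro i
      rw [hx1def, apply_sum (F i) _ w1' (fun y => y) hw1's]
      refine sum_scompat (f := fun y => F i y)
        (fun y hy => ?_) (fun y hy => htop1 y (Finset.erase_subset _ _ hy) i)
      rw [hw1'def]
      exact (mul_pos (inv_pos.2 hb1pos) (hw1 y (Finset.erase_subset _ _ hy))).le
    have hx2compat : ∀ i : ι, scompat (sg F z i) (F i x2) := by
      intro i
      rw [hx2def, apply_sum (F i) _ w2' (fun y => y) hw2's]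
      refine sum_scompat (f := fun y => F i y)
        (fun y hy => ?_) (fun y hy => htop2' y (Finset.erase_subset _ _ hy) i)
      rw [hw2'def]
      exact (mul_pos (inv_pos.2 hb2pos) (hw2 y (Finset.erase_subset _ _ hy))).le
    have key : ∀ i : ι, sg F z i ≠ 0 → F i x1 = 0 → a2 ≤ a1 := by
      intro i hi hv
      have hFeq1 : F i x = a1 * F i z + b1 * F i x1 := by
        rw [hsplit1]
        have : a1 + b1 = 1 := by linarith
        exact apply_combo2 (F i) this z x1
      have hFeq2 : F i x = a2 * F i z + b2 * F i x2 := by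
        rw [hsplit2]
        have : a2 + b2 = 1 := by linarith
        exact apply_combo2 (F i) this z x2
      rw [hv, mul_zero, add_zero] at hFeq1
      cases hsgn : sg F z i with
      | zero => exact absurd hsgn hi
      | pos =>
        have hFz : 0 < F i z := by
          have := hsgn
          rw [show sg F z i = SignType.sign (F i z) from rfl, SignType.pos_eq_one,
            sign_eq_one_iff] at this
          exact this
        have hq : 0 ≤ F i x2 := by
          have := hx2compat i
          rw [hsgn, scompat_pos] at this
          exact this
        nlinarith [hFeq1, hFeq2, hb2pos, hq, hFz]
      | neg =>
        have hFz : F i z < 0 := by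
          have := hsgn
          rw [show sg F z i = SignType.sign (F i z) from rfl, SignType.neg_eq_neg_one,
            sign_eq_neg_one_iff] at this
          exact this
        have hq : F i x2 ≤ 0 := by
          have := hx2compat i
          rw [hsgn, scompat_neg] at this
          exact this
        nlinarith [hFeq1, hFeq2, hb2pos, hq, hFz]
    have key' : ∀ i : ι, sg F z i ≠ 0 → F i x2 = 0 → a1 ≤ a2 := by
      intro i hi hv
      have hFeq1 : F i x = a1 * F i z + b1 * F i x1 := by
        rw [hsplit1]
        have : a1 + b1 = 1 := by linarith
        exact apply_combo2 (F i) this z x1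
      have hFeq2 : F i x = a2 * F i z + b2 * F i x2 := by
        rw [hsplit2]
        have : a2 + b2 = 1 := by linarith
        exact apply_combo2 (F i) this z x2
      rw [hv, mul_zero, add_zero] at hFeq2
      cases hsgn : sg F z i with
      | zero => exact absurd hsgn hi
      | pos =>
        have hFz : 0 < F i z := by
          have := hsgn
          rw [show sg F z i = SignType.sign (F i z) from rfl, SignType.pos_eq_one,
            sign_eq_one_iff] at this
          exact this
        have hq : 0 ≤ F i x1 := by
          have := hx1compat i
          rw [hsgn, scompat_pos] at this
          exact this
        nlinarith [hFeq1, hFeq2, hb1pos, hq, hFz]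
      | neg =>
        have hFz : F i z < 0 := by
          have := hsgn
          rw [show sg F z i = SignType.sign (F i z) from rfl, SignType.neg_eq_neg_one,
            sign_eq_neg_one_iff] at this
          exact this
        have hq : F i x1 ≤ 0 := by
          have := hx1compat i
          rw [hsgn, scompat_neg] at this
          exact this
        nlinarith [hFeq1, hFeq2, hb1pos, hq, hFz]
    have haa : a1 = a2 :=
      le_antisymm (key' i2 hi2z (hx2vanish i2 hi20)) (key i1 hi1z (hx1vanish i1 hi10))
    have hbb : b1 = b2 := by linarith
    have hx12 : x1 = x2 := by
      have h1 : b1 • x1 = x - a1 • z := by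
        rw [hsplit1]; abel
      have h2 : b1 • x2 = x - a1 • z := by
        rw [hbb, haa, hsplit2]; abel
      exact smul_right_injective E hb1pos.ne' (h1.trans h2.symm)
    -- apply the induction hypothesis to the erased faces
    have hcard' : (t1.erase z).card + (t2.erase z).card ≤ N := by
      rw [Finset.card_erase_of_mem hz1, Finset.card_erase_of_mem hz2']
      have c1 := Finset.card_pos.2 ht1.1
      have c2 := Finset.card_pos.2 ht2.1
      omega
    have hx1mem : x1 ∈ convexHull ℝ ((↑(t1.erase z) ∩ ↑(t2.erase z) : Set E)) :=
      IH (t1.erase z) (t2.erase z)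
        (faces_mono ht1 (Finset.erase_subset _ _) he1)
        (faces_mono ht2 (Finset.erase_subset _ _) he2)
        hcard' x1 w1' w2'
        (fun y hy => by
          rw [hw1'def]
          exact mul_pos (inv_pos.2 hb1pos) (hw1 y (Finset.erase_subset _ _ hy)))
        hw1's hx1def.symm
        (fun y hy => by
          rw [hw2'def]
          exact mul_pos (inv_pos.2 hb2pos) (hw2 y (Finset.erase_subset _ _ hy)))
        hw2's (by rw [← hx2def, ← hx12])
    have hx1mem' : x1 ∈ convexHull ℝ ((↑t1 ∩ ↑t2 : Set E)) := by
      refine convexHull_mono ?_ hx1mem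
      intro a ha
      obtain ⟨ha1, ha2⟩ := ha
      exact ⟨Finset.erase_subset _ _ ha1, Finset.erase_subset _ _ ha2⟩
    have hzc : z ∈ convexHull ℝ ((↑t1 ∩ ↑t2 : Set E)) :=
      subset_convexHull ℝ _ hzmem
    rw [hsplit1]
    have ha1pos : (0:ℝ) ≤ a1 := by rw [ha1def]; exact (hw1 z hz1).le
    have hb1nn : (0:ℝ) ≤ b1 := hb1pos.le
    exact (convex_convexHull ℝ ((↑t1 ∩ ↑t2 : Set E))) hzc hx1mem' ha1pos hb1nn (by linarith)

end PolyTri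

end Part3
section Part4

open Finset Set Bornology

namespace PolyTri

variable {E ι : Type*} [NormedAddCommGroup E] [NormedSpace ℝ E]
variable {F : ι → (E →ᵃ[ℝ] ℝ)} {P : Set E}

lemma linear_sub (f : E →ᵃ[ℝ] ℝ) (x z : E) : f.linear (x - z) = f x - f z := by
  rw [map_sub, linear_eq f x, linear_eq f z]
  ring

/-- If `P` is closed and sign-determined, then `P` contains the closure of each of its
open cells. -/
lemma mem_of_vle (hcl : IsClosed P) (hsgn : ∀ x ∈ P, ∀ y, sg F y = sg F x → y ∈ P)
    {z x : E} (hz : z ∈ P) (h : vle (sg F x) (sg F z)) : x ∈ P := by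
  have key : ∀ c : ℝ, 0 < c → c ≤ 1 → c • z + (1 - c) • x ∈ P := by
    intro c hc0 hc1
    refine hsgn z hz _ ?_
    funext i
    show SignType.sign (F i (c • z + (1 - c) • x)) = sg F z i
    rw [apply_combo2 (F i) (by ring : c + (1 - c) = 1) z x]
    cases hsgn2 : sg F z i with
    | zero =>
      have hz0 : F i z = 0 := by
        have : SignType.sign (F i z) = SignType.zero := hsgn2
        rw [SignType.zero_eq_zero, sign_eq_zero_iff] at this
        exact this
      have hx0 : F i x = 0 := by
        have hx' : sg F x i = 0 := by
          rcases h i with h0 | he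
          · exact h0
          · rw [he, hsgn2, SignType.zero_eq_zero]
        exact sign_eq_zero_iff.1 hx'
      rw [SignType.zero_eq_zero, sign_eq_zero_iff, hz0, hx0]
      ring
    | pos =>
      have hzpos : 0 < F i z := by
        have : SignType.sign (F i z) = SignType.pos := hsgn2
        rw [SignType.pos_eq_one, sign_eq_one_iff] at this
        exact this
      have hxnn : 0 ≤ F i x := by
        rcases h i with h0 | he
        · rw [sign_eq_zero_iff.1 h0]
        · have : SignType.sign (F i x) = SignType.pos := by rw [← hsgn2]; exact he
          rw [SignType.pos_eq_one, sign_eq_one_iff] at this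
          exact this.le
      rw [SignType.pos_eq_one, sign_eq_one_iff]
      nlinarith
    | neg =>
      have hzneg : F i z < 0 := by
        have : SignType.sign (F i z) = SignType.neg := hsgn2
        rw [SignType.neg_eq_neg_one, sign_eq_neg_one_iff] at this
        exact this
      have hxnp : F i x ≤ 0 := by
        rcases h i with h0 | he
        · rw [sign_eq_zero_iff.1 h0]
        · have : SignType.sign (F i x) = SignType.neg := by rw [← hsgn2]; exact he
          rw [SignType.neg_eq_neg_one, sign_eq_neg_one_iff] at this
          exact this.le
      rw [SignType.neg_eq_neg_one, sign_eq_neg_one_iff]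
      nlinarith
  have hcc : Filter.Tendsto (fun k : ℕ => ((k : ℝ) + 1)⁻¹) Filter.atTop (nhds 0) := by
    have := tendsto_one_div_add_atTop_nhds_zero_nat (𝕜 := ℝ)
    simpa [one_div] using this
  have htend : Filter.Tendsto (fun k : ℕ => ((k : ℝ) + 1)⁻¹ • z + (1 - ((k : ℝ) + 1)⁻¹) • x)
      Filter.atTop (nhds x) := by
    have h1 : Filter.Tendsto (fun k : ℕ => ((k : ℝ) + 1)⁻¹ • z) Filter.atTop
        (nhds ((0:ℝ) • z)) := hcc.smul_const z
    have h2 : Filter.Tendsto (fun k : ℕ => (1 - ((k : ℝ) + 1)⁻¹) • x) Filter.atTop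
        (nhds (((1:ℝ) - 0) • x)) := (tendsto_const_nhds.sub hcc).smul_const x
    have := h1.add h2
    simpa using this
  refine hcl.mem_of_tendsto htend (Filter.Eventually.of_forall fun k => ?_)
  refine key _ (by positivity) ?_
  rw [← one_div]
  rw [div_le_one (by positivity)]
  linarith [Nat.cast_nonneg (α := ℝ) k]

variable [Finite ι]

/-- Ray-shooting: every point of `P` lies in the convex hull of a face whose sign vectors all
lie below its own. -/
lemma exists_face (hcl : IsClosed P) (hbd : IsBounded P)
    (hsgn : ∀ x ∈ P, ∀ y, sg F y = sg F x → y ∈ P) :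
    ∀ x ∈ P, ∃ t ∈ faces F P, x ∈ convexHull ℝ (↑t : Set E) ∧
      ∀ y ∈ t, vle (sg F y) (sg F x) := by
  classical
  have main : ∀ (k : ℕ), ∀ x ∈ P, {i | sg F x i ≠ 0}.ncard = k →
      ∃ t ∈ faces F P, x ∈ convexHull ℝ (↑t : Set E) ∧
        ∀ y ∈ t, vle (sg F y) (sg F x) := by
    intro k
    induction k using Nat.strong_induction_on with
    | _ k IH =>
    intro x hx hk
    obtain ⟨z, hzdef⟩ : ∃ v : E, v = pt F P (sg F x) := ⟨_, rfl⟩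
    have hzP : z ∈ P := by rw [hzdef]; exact (pt_spec hx).1
    have hzsg : sg F z = sg F x := by rw [hzdef]; exact (pt_spec hx).2
    have hzvert : isVert F P z := ⟨hzP, by rw [hzsg, ← hzdef]⟩
    by_cases hxz : x = z
    · refine ⟨{z}, ⟨Finset.singleton_nonempty z, ?_, ?_⟩, ?_, ?_⟩
      · intro v hv
        rw [Finset.mem_singleton] at hv
        subst hv
        exact hzvert
      · intro u hu v hv
        rw [Finset.mem_singleton] at hu hv
        subst hu; subst hv
        exact Or.inl (vle_refl _)
      · rw [hxz]
        exact subset_convexHull ℝ _ (by simp)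
      · intro v hv
        rw [Finset.mem_singleton] at hv
        subst hv
        rw [hzsg]
        exact vle_refl _
    · -- ray shooting from z through x
      obtain ⟨g, hgdef⟩ : ∃ v : ℝ → E, v = fun s : ℝ => s • (x - z) + z := ⟨_, rfl⟩
      have hg1 : g 1 = x := by rw [hgdef]; simp
      have hgl : ∀ (i : ι) (s : ℝ), F i (g s) = s * (F i).linear (x - z) + F i z := by
        intro i s
        rw [hgdef]
        show F i (s • (x - z) +ᵥ z) = _
        rw [AffineMap.map_vadd, map_smul]
        simp [smul_eq_mul]
      have hlinz : ∀ i, sg F x i = 0 → (F i).linear (x - z) = 0 ∧ F i z = 0 := by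
        intro i hi
        have hxi : F i x = 0 := sign_eq_zero_iff.1 hi
        have hzi : F i z = 0 := by
          have : sg F z i = 0 := by rw [hzsg]; exact hi
          exact sign_eq_zero_iff.1 this
        refine ⟨?_, hzi⟩
        rw [linear_sub, hxi, hzi, sub_zero]
      obtain ⟨A, hAdef⟩ : ∃ v : Set ℝ, v = {s : ℝ | 1 ≤ s ∧ ∀ i, scompat (sg F x i) (F i (g s))} :=
        ⟨_, rfl⟩
      have hA1 : (1:ℝ) ∈ A := by
        rw [hAdef]
        exact ⟨le_refl 1, fun i => by rw [hg1]; exact Or.inr rfl⟩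
      have hAP : ∀ s ∈ A, g s ∈ P := by
        intro s hs
        rw [hAdef] at hs
        refine mem_of_vle hcl hsgn hzP (fun i => ?_)
        have := hs.2 i
        rw [show sg F z i = sg F x i from by rw [hzsg]]
        exact this
      have hxz' : (0:ℝ) < ‖x - z‖ := by
        rw [norm_pos_iff]
        exact sub_ne_zero.2 hxz
      have hbdd : BddAbove A := by
        by_contra hub
        rw [not_bddAbove_iff] at hub
        obtain ⟨C, hC⟩ := isBounded_iff_forall_norm_le.1 hbd
        obtain ⟨s, hsA, hs⟩ := hub ((C + ‖z‖) / ‖x - z‖)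
        have hs1 : 1 ≤ s := by rw [hAdef] at hsA; exact hsA.1
        have h1 : ‖g s‖ ≤ C := hC _ (hAP s hsA)
        have h2 : s * ‖x - z‖ ≤ ‖g s‖ + ‖z‖ := by
          have he : g s - z = s • (x - z) := by rw [hgdef]; simp
          have := norm_sub_le (g s) z
          rw [he, norm_smul, Real.norm_eq_abs, abs_of_pos (by linarith : (0:ℝ) < s)] at this
          linarith
        rw [div_lt_iff₀ hxz'] at hs
        linarith
      have hAcl : IsClosed A := by
        have hrw : A = Ici (1:ℝ) ∩ ⋂ i, {s | scompat (sg F x i) (F i (g s))} := by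
          rw [hAdef]
          ext s
          simp [Set.mem_iInter, Set.mem_Ici]
        rw [hrw]
        refine isClosed_Ici.inter (isClosed_iInter fun i => ?_)
        have hgc : Continuous fun s : ℝ => F i (g s) := by
          have : (fun s : ℝ => F i (g s)) = fun s => s * (F i).linear (x - z) + F i z :=
            funext (hgl i)
          rw [this]
          exact (continuous_id.mul continuous_const).add continuous_const
        cases hsx : sg F x i with
        | zero =>
          have hset : {s : ℝ | scompat SignType.zero (F i (g s))} =
              (fun s => F i (g s)) ⁻¹' {0} := by
            ext s
            simp only [Set.mem_setOf_eq, Set.mem_preimage, Set.mem_singleton_iff]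
            exact scompat_zero
          rw [hset]
          exact IsClosed.preimage hgc isClosed_singleton
        | pos =>
          have hset : {s : ℝ | scompat SignType.pos (F i (g s))} =
              (fun s => F i (g s)) ⁻¹' (Ici 0) := by
            ext s
            simp only [Set.mem_setOf_eq, Set.mem_preimage, Set.mem_Ici]
            exact scompat_pos
          rw [hset]
          exact IsClosed.preimage hgc isClosed_Ici
        | neg =>
          have hset : {s : ℝ | scompat SignType.neg (F i (g s))} =
              (fun s => F i (g s)) ⁻¹' (Iic 0) := by
            ext s
            simp only [Set.mem_setOf_eq, Set.mem_preimage, Set.mem_Iic]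
            exact scompat_neg
          rw [hset]
          exact IsClosed.preimage hgc isClosed_Iic
      obtain ⟨s0, hs0def⟩ : ∃ v : ℝ, v = sSup A := ⟨_, rfl⟩
      have hs0A : s0 ∈ A := by rw [hs0def]; exact hAcl.csSup_mem ⟨1, hA1⟩ hbdd
      have hs01 : 1 ≤ s0 := by rw [hAdef] at hs0A; exact hs0A.1
      have hs0pos : (0:ℝ) < s0 := by linarith
      have hyvle : vle (sg F (g s0)) (sg F x) := by
        rw [hAdef] at hs0A
        exact fun i => hs0A.2 i
      have hyP : g s0 ∈ P := hAP s0 hs0A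
      have hyne : sg F (g s0) ≠ sg F x := by
        intro heq
        obtain ⟨U, hUdef⟩ : ∃ v : Set ℝ,
            v = {s : ℝ | ∀ i, sg F x i ≠ 0 → SignType.sign (F i (g s)) = sg F x i} := ⟨_, rfl⟩
        have hUopen : IsOpen U := by
          have hrw : U = ⋂ i, {s | sg F x i ≠ 0 → SignType.sign (F i (g s)) = sg F x i} := by
            rw [hUdef]; ext s; simp [Set.mem_iInter]
          rw [hrw]
          refine isOpen_iInter_of_finite fun i => ?_
          have hgc : Continuous fun s : ℝ => F i (g s) := by
            have : (fun s : ℝ => F i (g s)) = fun s => s * (F i).linear (x - z) + F i z :=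
              funext (hgl i)
            rw [this]
            exact (continuous_id.mul continuous_const).add continuous_const
          by_cases hi : sg F x i = 0
          · have hset : {s : ℝ | sg F x i ≠ 0 → SignType.sign (F i (g s)) = sg F x i} =
                (Set.univ : Set ℝ) := by
              ext s
              simp [hi]
            rw [hset]
            exact isOpen_univ
          · cases hsx : sg F x i with
            | zero => exact absurd (by rw [hsx]; rfl) hi
            | pos =>
              have hset : {s : ℝ | SignType.pos ≠ 0 → SignType.sign (F i (g s)) = SignType.pos} =
                  (fun s => F i (g s)) ⁻¹' (Ioi 0) := by
                ext s
                simp only [Set.mem_setOf_eq, Set.mem_preimage, Set.mem_Ioi]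
                constructor
                · intro hcond
                  have := hcond (by decide)
                  rw [SignType.pos_eq_one, sign_eq_one_iff] at this
                  exact this
                · intro hpos _
                  rw [SignType.pos_eq_one]
                  exact sign_pos hpos
              rw [hset]
              exact IsOpen.preimage hgc isOpen_Ioi
            | neg =>
              have hset : {s : ℝ | SignType.neg ≠ 0 → SignType.sign (F i (g s)) = SignType.neg} =
                  (fun s => F i (g s)) ⁻¹' (Iio 0) := by
                ext s
                simp only [Set.mem_setOf_eq, Set.mem_preimage, Set.mem_Iio]
                constructor
                · intro hcond
                  have := hcond (by decide)
                  rw [SignType.neg_eq_neg_one, sign_eq_neg_one_iff] at this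
                  exact this
                · intro hneg _
                  rw [SignType.neg_eq_neg_one]
                  exact sign_neg hneg
              rw [hset]
              exact IsOpen.preimage hgc isOpen_Iio
        have hs0U : s0 ∈ U := by
          rw [hUdef]
          intro i _
          rw [← heq]
          rfl
        obtain ⟨ε, hε, hball⟩ := Metric.isOpen_iff.1 hUopen s0 hs0U
        have hs'U : s0 + ε / 2 ∈ U := by
          refine hball ?_
          rw [Metric.mem_ball, Real.dist_eq, add_sub_cancel_left, abs_of_pos (by linarith)]
          linarith
        have hs'A : s0 + ε / 2 ∈ A := by
          rw [hAdef]
          refine ⟨by linarith, fun i => ?_⟩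
          by_cases hi : sg F x i = 0
          · obtain ⟨hl, hz0⟩ := hlinz i hi
            rw [hi]
            have : F i (g (s0 + ε / 2)) = 0 := by
              rw [hgl i, hl, hz0, mul_zero, add_zero]
            exact Or.inl (by rw [this, sign_zero])
          · rw [hUdef] at hs'U
            exact Or.inr (hs'U i hi)
        have hle : s0 + ε / 2 ≤ sSup A := le_csSup hbdd hs'A
        rw [← hs0def] at hle
        linarith
      -- the support strictly decreases
      have hsub : {i | sg F (g s0) i ≠ 0} ⊂ {i | sg F x i ≠ 0} := by
        constructor
        · intro i hi
          simp only [Set.mem_setOf_eq] at hi ⊢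
          rcases hyvle i with h0 | he
          · exact absurd h0 hi
          · rw [← he]; exact hi
        · intro hsup
          obtain ⟨i, hi0, hix⟩ := exists_sep hyvle hyne
          have : sg F (g s0) i ≠ 0 := hsup hix
          exact this hi0
      have hlt : {i | sg F (g s0) i ≠ 0}.ncard < k := by
        rw [← hk]
        exact Set.ncard_lt_ncard hsub (Set.toFinite _)
      obtain ⟨t, htf, htc, htv⟩ := IH _ hlt (g s0) hyP rfl
      have htvx : ∀ v ∈ t, vle (sg F v) (sg F x) :=
        fun v hv => vle_trans (htv v hv) hyvle
      refine ⟨insert z t, ⟨Finset.insert_nonempty _ _, ?_, ?_⟩, ?_, ?_⟩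
      · intro v hv
        rcases Finset.mem_insert.1 hv with rfl | hv'
        · exact hzvert
        · exact htf.2.1 v hv'
      · intro u hu v hv
        rcases Finset.mem_insert.1 hu with rfl | hu' <;>
          rcases Finset.mem_insert.1 hv with rfl | hv'
        · exact Or.inl (vle_refl _)
        · refine Or.inr ?_
          rw [hzsg]
          exact htvx v hv'
        · refine Or.inl ?_
          rw [hzsg]
          exact htvx u hu'
        · exact htf.2.2 u hu' v hv'
      · -- x is on the segment [z, g s0]
        have hxeq : x = (1 - s0⁻¹) • z + s0⁻¹ • (g s0) := by
          rw [hgdef]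
          simp only [smul_add, smul_smul, inv_mul_cancel₀ hs0pos.ne', one_smul, sub_smul]
          abel
        rw [hxeq]
        have hzc : z ∈ convexHull ℝ (↑(insert z t) : Set E) :=
          subset_convexHull ℝ _ (by simp)
        have hyc : g s0 ∈ convexHull ℝ (↑(insert z t) : Set E) := by
          refine convexHull_mono ?_ htc
          exact_mod_cast Finset.subset_insert _ _
        have hinv1 : s0⁻¹ ≤ 1 := by
          rw [← one_div]
          rw [div_le_one hs0pos]
          exact hs01
        exact (convex_convexHull ℝ _) hzc hyc (by linarith) (by positivity) (by ring)
      · intro v hv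
        rcases Finset.mem_insert.1 hv with rfl | hv'
        · rw [hzsg]; exact vle_refl _
        · exact htvx v hv'
  intro x hx
  exact main _ x hx rfl

end PolyTri

end Part4
section Part5

open Finset Set Bornology

namespace PolyTri

variable {E ι : Type*} [NormedAddCommGroup E] [NormedSpace ℝ E] [Finite ι]
variable (F : ι → (E →ᵃ[ℝ] ℝ)) (P : Set E)

/-- The triangulating simplicial complex. -/
noncomputable def complex (hcl : IsClosed P)
    (hsgn : ∀ x ∈ P, ∀ y, sg F y = sg F x → y ∈ P) :
    Geometry.SimplicialComplex ℝ E where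
  faces := faces F P
  isRelLowerSet_faces := fun _ ht => ⟨ht.1, fun _ hsub hne => faces_mono ht hsub hne⟩
  indep := fun ht => faces_indep ht
  inter_subset_convexHull := by
    classical
    intro t1 t2 ht1 ht2 x hx
    obtain ⟨hx1, hx2⟩ := hx
    rw [Finset.convexHull_eq] at hx1 hx2
    obtain ⟨w1, hw1nn, hw1s, hw1c⟩ := hx1
    obtain ⟨w2, hw2nn, hw2s, hw2c⟩ := hx2
    rw [Finset.centerMass_eq_of_sum_1 _ _ hw1s] at hw1c
    rw [Finset.centerMass_eq_of_sum_1 _ _ hw2s] at hw2c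
    -- restrict to supports
    have hfil1 : ∑ y ∈ t1.filter (fun y => w1 y ≠ 0), w1 y = 1 := by
      rw [Finset.sum_filter_of_ne (fun y _ h => h)]
      exact hw1s
    have hfil2 : ∑ y ∈ t2.filter (fun y => w2 y ≠ 0), w2 y = 1 := by
      rw [Finset.sum_filter_of_ne (fun y _ h => h)]
      exact hw2s
    have hfc1 : ∑ y ∈ t1.filter (fun y => w1 y ≠ 0), w1 y • y = x := by
      rw [Finset.sum_filter_of_ne]
      · exact hw1c
      · intro y _ h hy
        exact h (by rw [hy, zero_smul])
    have hfc2 : ∑ y ∈ t2.filter (fun y => w2 y ≠ 0), w2 y • y = x := by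
      rw [Finset.sum_filter_of_ne]
      · exact hw2c
      · intro y _ h hy
        exact h (by rw [hy, zero_smul])
    have hne1 : (t1.filter (fun y => w1 y ≠ 0)).Nonempty := by
      rw [Finset.nonempty_iff_ne_empty]
      intro h
      rw [h, Finset.sum_empty] at hfil1
      norm_num at hfil1
    have hne2 : (t2.filter (fun y => w2 y ≠ 0)).Nonempty := by
      rw [Finset.nonempty_iff_ne_empty]
      intro h
      rw [h, Finset.sum_empty] at hfil2
      norm_num at hfil2
    have hmem := inter_key (F := F) (P := P)
      ((t1.filter (fun y => w1 y ≠ 0)).card + (t2.filter (fun y => w2 y ≠ 0)).card)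
      _ _ (faces_mono ht1 (Finset.filter_subset _ _) hne1)
      (faces_mono ht2 (Finset.filter_subset _ _) hne2) (le_refl _) x _ _
      (fun y hy => lt_of_le_of_ne (hw1nn y (Finset.filter_subset _ _ hy))
        (Ne.symm (Finset.mem_filter.1 hy).2))
      hfil1 hfc1
      (fun y hy => lt_of_le_of_ne (hw2nn y (Finset.filter_subset _ _ hy))
        (Ne.symm (Finset.mem_filter.1 hy).2))
      hfil2 hfc2
    refine convexHull_mono ?_ hmem
    intro a ha
    exact ⟨Finset.filter_subset _ _ ha.1, Finset.filter_subset _ _ ha.2⟩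

lemma complex_faces_finite (hcl : IsClosed P)
    (hsgn : ∀ x ∈ P, ∀ y, sg F y = sg F x → y ∈ P) :
    (complex F P hcl hsgn).faces.Finite := by
  classical
  have hV : (Set.range (fun ε : ι → SignType => pt F P ε)).Finite :=
    Set.finite_range _
  have hsub : ∀ t ∈ (complex F P hcl hsgn).faces,
      (↑t : Set E) ⊆ Set.range (fun ε : ι → SignType => pt F P ε) := by
    intro t ht y hy
    exact ⟨sg F y, (ht.2.1 y hy).2⟩
  have himage : ((fun t : Finset E => (↑t : Set E)) '' (complex F P hcl hsgn).faces).Finite := by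
    refine Set.Finite.subset hV.finite_subsets ?_
    rintro _ ⟨t, ht, rfl⟩
    exact hsub t ht
  exact Set.Finite.of_finite_image himage (Finset.coe_injective.injOn)

lemma complex_space (hcl : IsClosed P) (hbd : IsBounded P)
    (hsgn : ∀ x ∈ P, ∀ y, sg F y = sg F x → y ∈ P) :
    (complex F P hcl hsgn).space = P := by
  apply Set.Subset.antisymm
  · rintro x hx
    rw [Geometry.SimplicialComplex.space, Set.mem_iUnion₂] at hx
    obtain ⟨t, ht, hxt⟩ := hx
    obtain ⟨z, hz, htop⟩ := exists_top (sg F) t ht.1 ht.2.2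
    rw [Finset.convexHull_eq] at hxt
    obtain ⟨w, hwnn, hws, hwc⟩ := hxt
    rw [Finset.centerMass_eq_of_sum_1 _ _ hws] at hwc
    have hvle : vle (sg F x) (sg F z) := by
      rw [← hwc]
      exact vle_combo hwnn hws htop
    exact mem_of_vle hcl hsgn (ht.2.1 z hz).1 hvle
  · intro x hx
    obtain ⟨t, ht, hxt, -⟩ := exists_face hcl hbd hsgn x hx
    rw [Geometry.SimplicialComplex.space, Set.mem_iUnion₂]
    exact ⟨t, ht, hxt⟩

/-- Abstract triangulation theorem: a compact sign-determined set is the space of a finite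
simplicial complex. -/
theorem triangulable_aux (hcl : IsClosed P) (hbd : IsBounded P)
    (hsgn : ∀ x ∈ P, ∀ y, sg F y = sg F x → y ∈ P) :
    ∃ K : Geometry.SimplicialComplex ℝ E, K.faces.Finite ∧ K.space = P :=
  ⟨complex F P hcl hsgn, complex_faces_finite F P hcl hsgn, complex_space F P hcl hbd hsgn⟩

end PolyTri

end Part5
section Part6

open Finset Set Bornology

namespace PolyTri

variable {E : Type*} [NormedAddCommGroup E] [NormedSpace ℝ E]

/-- Membership in the convex hull of a subfamily of an affine basis, in terms of barycentric
coordinates. -/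
lemma mem_convexHull_iff_coord {s : Finset E} {t : Set E} [Fintype ↥t] (hst : ↑s ⊆ t)
    (b : AffineBasis ↥t ℝ E) (hb : ∀ i : ↥t, b i = ↑i) (x : E) :
    x ∈ convexHull ℝ (↑s : Set E) ↔
      ∀ i : ↥t, 0 ≤ b.coord i x ∧ ((i : E) ∉ s → b.coord i x = 0) := by
  classical
  constructor
  · intro hx
    rw [Finset.convexHull_eq] at hx
    obtain ⟨w, hwnn, hws, hwc⟩ := hx
    rw [Finset.centerMass_eq_of_sum_1 _ _ hws] at hwc
    intro i
    have hco : b.coord i x = ∑ y ∈ s, w y * b.coord i y := by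
      rw [← hwc]
      exact apply_sum (b.coord i) s w (fun y => y) hws
    have hcoordval : ∀ y (hy : y ∈ s), b.coord i y = if i = ⟨y, hst hy⟩ then 1 else 0 := by
      intro y hy
      have hyb : y = b ⟨y, hst hy⟩ := by rw [hb ⟨y, hst hy⟩]
      conv_lhs => rw [hyb]
      exact b.coord_apply i ⟨y, hst hy⟩
    constructor
    · rw [hco]
      refine Finset.sum_nonneg fun y hy => ?_
      rw [hcoordval y hy]
      by_cases h : i = ⟨y, hst hy⟩ <;> simp [h, hwnn y hy]
    · intro hi
      rw [hco]
      refine Finset.sum_eq_zero fun y hy => ?_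
      rw [hcoordval y hy, if_neg, mul_zero]
      intro h
      exact hi (by rw [h]; exact hy)
  · intro hcond
    have hx : x = ∑ i : ↥t, b.coord i x • b i := by
      have h1 := b.affineCombination_coord_eq_self x
      rw [Finset.univ.affineCombination_eq_linear_combination _ _
        (b.sum_coord_apply_eq_one x)] at h1
      exact h1.symm
    have hsum : ∑ i ∈ Finset.univ.filter (fun i : ↥t => (i : E) ∈ s), b.coord i x = 1 := by
      rw [Finset.sum_filter_of_ne (fun i _ h => by
        by_contra hmem
        exact h ((hcond i).2 hmem))]
      exact b.sum_coord_apply_eq_one x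
    have hxq : ∑ i ∈ Finset.univ.filter (fun i : ↥t => (i : E) ∈ s),
        b.coord i x • b i = x := by
      rw [Finset.sum_filter_of_ne (fun i _ h => by
        by_contra hmem
        exact h (by rw [(hcond i).2 hmem, zero_smul]))]
      exact hx.symm
    have hmem := Finset.centerMass_mem_convexHull
      (Finset.univ.filter (fun i : ↥t => (i : E) ∈ s))
      (w := fun i => b.coord i x) (z := fun i => b i)
      (fun i _ => (hcond i).1)
      (by rw [hsum]; norm_num)
      (s := (↑s : Set E))
      (fun i hi => by
        show (b i : E) ∈ (↑s : Set E)
        rw [hb i]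
        exact (Finset.mem_filter.1 hi).2)
    rw [Finset.centerMass_eq_of_sum_1 _ _ hsum, hxq] at hmem
    exact hmem

end PolyTri

end Part6

/-- A set `P ⊆ ℝⁿ` is a polytope if it is a nonempty finite union of geometric simplices,
i.e. convex hulls of finite affinely independent sets of points. -/
def IsPolytope (n : ℕ) (P : Set (Fin n → ℝ)) : Prop :=
  P.Nonempty ∧ ∃ S : Finset (Finset (Fin n → ℝ)),
    (∀ s ∈ S, AffineIndependent ℝ ((↑) : s → (Fin n → ℝ))) ∧
    P = ⋃ s ∈ S, convexHull ℝ (s : Set (Fin n → ℝ))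

/-- **Every polytope is triangulable**: any nonempty finite union of geometric simplices in
`ℝⁿ` is the underlying space of a finite geometric simplicial complex. -/
theorem polytope_triangulable (n : ℕ) (P : Set (Fin n → ℝ)) (hP : IsPolytope n P) :
    ∃ K : Geometry.SimplicialComplex ℝ (Fin n → ℝ), K.faces.Finite ∧ K.space = P := by
  classical
  obtain ⟨-, S, hSind, hSP⟩ := hP
  have hext : ∀ s : ↥S, ∃ t : Set (Fin n → ℝ), ↑(s : Finset (Fin n → ℝ)) ⊆ t ∧
      AffineIndependent ℝ (fun p => p : t → (Fin n → ℝ)) ∧ affineSpan ℝ t = ⊤ := by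
    intro s
    exact exists_subset_affineIndependent_affineSpan_eq_top (hSind s s.2)
  choose T hsub hind hspan using hext
  haveI hTfin : ∀ s : ↥S, Finite ↥(T s) := fun s =>
    (finite_set_of_fin_dim_affineIndependent ℝ (hind s)).to_subtype
  haveI hTfty : ∀ s : ↥S, Fintype ↥(T s) := fun s => Fintype.ofFinite _
  let B : ∀ s : ↥S, AffineBasis ↥(T s) ℝ (Fin n → ℝ) := fun s =>
    ⟨fun i => ↑i, hind s, by rw [Subtype.range_coe]; exact hspan s⟩
  haveI : Finite (Σ s : ↥S, ↥(T s)) := by infer_instance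
  let Ff : (Σ s : ↥S, ↥(T s)) → ((Fin n → ℝ) →ᵃ[ℝ] ℝ) := fun j => (B j.1).coord j.2
  have hchar : ∀ (s : ↥S) (x : Fin n → ℝ),
      x ∈ convexHull ℝ (↑(s : Finset (Fin n → ℝ)) : Set (Fin n → ℝ)) ↔
      ∀ i : ↥(T s), 0 ≤ (B s).coord i x ∧
        ((i : Fin n → ℝ) ∉ (s : Finset (Fin n → ℝ)) → (B s).coord i x = 0) :=
    fun s x => PolyTri.mem_convexHull_iff_coord (hsub s) (B s) (fun i => rfl) x
  have hsgn : ∀ x ∈ P, ∀ y, PolyTri.sg Ff y = PolyTri.sg Ff x → y ∈ P := by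
    intro x hx y hxy
    rw [hSP] at hx ⊢
    rw [Set.mem_iUnion₂] at hx ⊢
    obtain ⟨s, hs, hxs⟩ := hx
    refine ⟨s, hs, ?_⟩
    rw [hchar ⟨s, hs⟩] at hxs ⊢
    intro i
    have hsg : SignType.sign ((B ⟨s, hs⟩).coord i y) = SignType.sign ((B ⟨s, hs⟩).coord i x) :=
      congrFun hxy ⟨⟨s, hs⟩, i⟩
    obtain ⟨h1, h2⟩ := hxs i
    constructor
    · rw [← sign_nonneg_iff, hsg, sign_nonneg_iff]
      exact h1
    · intro hni
      rw [← sign_eq_zero_iff, hsg, sign_eq_zero_iff]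
      exact h2 hni
  have hcomp : IsCompact P := by
    rw [hSP]
    exact S.finite_toSet.isCompact_biUnion
      (fun s _ => (s.finite_toSet).isCompact_convexHull ℝ)
  obtain ⟨K, hKf, hKs⟩ :=
    PolyTri.triangulable_aux Ff P hcomp.isClosed hcomp.isBounded hsgn
  exact ⟨K, hKf, hKs⟩
end

section
/- Any two geometric triangulations of the same set have a common refinement: if K and L are finite geometric simplicial complexes in ℝⁿ with the same underlying space S, then there exists a finite geometric simplicial complex M in ℝⁿ with underlying space S such that the convex hull of every face of K, and the convex hull of every face of L, is a union of convex hulls of faces of M. -/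
/-!
Every face of `K` or `L` is cut out by finitely many closed half-spaces `0 ≤ f` with `f` affine.
Starting from `K`, treat these hyperplanes `f = 0` one at a time: as long as some face has two
vertices strictly on opposite sides, subdivide that edge at its crossing point (a stellar
subdivision). This does not change the underlying space, and it strictly shrinks the finite set
of crossing vertex pairs, so it ends with a triangulation `M` of `S` no face of which crosses any
of the hyperplanes. If `x` lies in a face `σ` of `K` or `L`, take the smallest face `t` of `M`
containing `x`; then `x` has positive barycentric weights on `t`, and since `t` lies on one side
of every hyperplane bounding `σ`, it lies on the side of `x`, that is, `t ⊆ σ`. So `σ` is the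
union of the faces of `M` it contains.
-/

open Geometry

section FiniteWeights

variable {E : Type*} [DecidableEq E]

/-- The barycentric weights of `a • p + b • q` on the edge `{p, q}`. -/
def edgeWeights (p q : E) (a b : ℝ) (y : E) : ℝ :=
  (if y = p then a else 0) + (if y = q then b else 0)

variable {p q : E} {a b : ℝ}

lemma edgeWeights_pos (ha : 0 < a) (hb : 0 < b) {z : E} (hz : z ∈ ({p, q} : Finset E)) :
    0 < edgeWeights p q a b z := by
  unfold edgeWeights
  simp only [Finset.mem_insert, Finset.mem_singleton] at hz
  rcases hz with rfl | rfl <;> split_ifs <;> simp_all <;> linarith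

lemma edgeWeights_of_ne {y : E} (hyp : y ≠ p) (hyq : y ≠ q) : edgeWeights p q a b y = 0 := by
  simp [edgeWeights, hyp, hyq]

lemma edgeWeights_left (hpq : p ≠ q) : edgeWeights p q a b p = a := by
  simp [edgeWeights, hpq]

lemma edgeWeights_right (hpq : p ≠ q) : edgeWeights p q a b q = b := by
  simp [edgeWeights, hpq.symm]

lemma sum_edgeWeights_smul {F : Type*} [AddCommGroup F] [Module ℝ F] {S : Finset E}
    (hp : p ∈ S) (hq : q ∈ S) (v : E → F) :
    ∑ y ∈ S, edgeWeights p q a b y • v y = a • v p + b • v q := by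
  simp only [edgeWeights, add_smul, ite_smul, zero_smul, Finset.sum_add_distrib,
    Finset.sum_ite_eq', hp, hq, if_true]

lemma sum_edgeWeights {S : Finset E} (hp : p ∈ S) (hq : q ∈ S) :
    ∑ y ∈ S, edgeWeights p q a b y = a + b := by
  simpa using sum_edgeWeights_smul (a := a) (b := b) hp hq (fun _ => (1 : ℝ))

lemma sum_insert_smul_eq {F : Type*} [AddCommGroup F] [Module ℝ F] {s S : Finset E} {w : E}
    (hsS : s ⊆ S) (hws : w ∉ s) {κ : E → ℝ} {v : E → F} (hκ : ∑ y ∈ S, κ y • v y = v w)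
    (g : E → ℝ) :
    ∑ y ∈ insert w s, g y • v y = ∑ y ∈ S, ((s : Set E).indicator g y + g w * κ y) • v y := by
  simp_rw [add_smul, Finset.sum_add_distrib, mul_smul, ← Finset.smul_sum, hκ,
    Finset.sum_insert hws]
  rw [add_comm]
  congr 1
  rw [← Finset.sum_indicator_subset _ hsS]
  exact Finset.sum_congr rfl fun y _ => by by_cases hy : y ∈ s <;> simp [hy]

end FiniteWeights

section ConvexWeights

variable {E : Type*} [AddCommGroup E] [Module ℝ E]

lemma exists_weights_of_mem_convexHull {u : Finset E} {x : E}
    (hx : x ∈ convexHull ℝ (u : Set E)) :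
    ∃ g : E → ℝ, (∀ y, 0 ≤ g y) ∧ (∀ y ∉ u, g y = 0) ∧
      ∑ y ∈ u, g y = 1 ∧ ∑ y ∈ u, g y • y = x := by
  obtain ⟨g, hg₀, hg₁, hg₂⟩ := Finset.mem_convexHull'.1 hx
  refine ⟨(u : Set E).indicator g, fun y => ?_, fun y hy => Set.indicator_of_notMem hy _, ?_, ?_⟩
  · by_cases hy : y ∈ u
    · simpa [hy] using hg₀ y hy
    · simp [hy]
  · rwa [Finset.sum_indicator_subset _ subset_rfl]
  · rw [← hg₂]
    exact Finset.sum_congr rfl fun y hy => by simp [hy]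

lemma mem_convexHull_of_weights_eq_zero {u v : Finset E} {g : E → ℝ} {x : E} (hvu : v ⊆ u)
    (hg₀ : ∀ y ∈ v, 0 ≤ g y) (hg₁ : ∑ y ∈ u, g y = 1) (hg₂ : ∑ y ∈ u, g y • y = x)
    (hzero : ∀ y ∈ u, y ∉ v → g y = 0) : x ∈ convexHull ℝ (v : Set E) := by
  refine Finset.mem_convexHull'.2 ⟨g, hg₀, ?_, ?_⟩
  · rwa [Finset.sum_subset hvu hzero]
  · rwa [Finset.sum_subset hvu fun y hy hyv => by rw [hzero y hy hyv, zero_smul]]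

lemma exists_pos_weights_of_mem_convexHull {t : Finset E} {x : E}
    (hx : x ∈ convexHull ℝ (t : Set E)) :
    ∃ t' ⊆ t, ∃ g : E → ℝ, (∀ y ∈ t', 0 < g y) ∧ ∑ y ∈ t', g y = 1 ∧ ∑ y ∈ t', g y • y = x := by
  obtain ⟨g, hg₀, hg₁, hg₂⟩ := Finset.mem_convexHull'.1 hx
  have hpos : ∀ y ∈ t, g y ≠ 0 → 0 < g y := fun y hy h => (hg₀ y hy).lt_of_ne' h
  refine ⟨t.filter (fun y => 0 < g y), Finset.filter_subset _ _, g,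
    fun y hy => (Finset.mem_filter.1 hy).2, ?_, ?_⟩
  · rwa [Finset.sum_filter_of_ne hpos]
  · rwa [Finset.sum_filter_of_ne fun y hy h => hpos y hy (left_ne_zero_of_smul h)]

lemma AffineMap.apply_sum_smul_of_sum_eq_one {F : Type*} [AddCommGroup F] [Module ℝ F]
    (f : E →ᵃ[ℝ] F) {u : Finset E} {g : E → ℝ} (hg : ∑ y ∈ u, g y = 1) :
    f (∑ y ∈ u, g y • y) = ∑ y ∈ u, g y • f y := by
  have := Finset.map_affineCombination u (fun y => y) g hg f
  simp only [Finset.affineCombination_eq_linear_combination _ _ _ hg] at this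
  simpa using this

lemma apply_nonneg_of_pos_weights {t : Finset E} {g : E → ℝ} (hg₀ : ∀ y ∈ t, 0 < g y)
    (hg₁ : ∑ y ∈ t, g y = 1) {f : E →ᵃ[ℝ] ℝ}
    (hf : convexHull ℝ ↑t ⊆ {x | f x ≤ 0} ∨ convexHull ℝ ↑t ⊆ {x | 0 ≤ f x})
    (hfx : 0 ≤ f (∑ y ∈ t, g y • y)) {y : E} (hy : y ∈ t) : 0 ≤ f y := by
  rcases hf with hle | hge
  · have hterm : ∀ z ∈ t, g z * f z ≤ 0 := fun z hz =>
      mul_nonpos_of_nonneg_of_nonpos (hg₀ z hz).le (hle (subset_convexHull ℝ _ hz))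
    rw [f.apply_sum_smul_of_sum_eq_one hg₁] at hfx
    simp only [smul_eq_mul] at hfx
    have := (Finset.sum_eq_zero_iff_of_nonpos hterm).1
      (le_antisymm (Finset.sum_nonpos hterm) hfx) y hy
    rw [(mul_eq_zero.1 this).resolve_left (hg₀ y hy).ne']
  · exact hge (subset_convexHull ℝ _ hy)

lemma mem_convexHull_of_mem_openSegment {S : Finset E} {p q w : E} (hp : p ∈ S) (hq : q ∈ S)
    (hw : w ∈ openSegment ℝ p q) : w ∈ convexHull ℝ (S : Set E) := by
  refine convexHull_mono (Set.insert_subset hp (Set.singleton_subset_iff.2 hq)) ?_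
  rw [convexHull_pair]
  exact openSegment_subset_segment ℝ p q hw

lemma mem_affineSpan_pair_of_mem_openSegment {p q w : E} (hw : w ∈ openSegment ℝ p q) :
    p ∈ line[ℝ, q, w] := by
  obtain ⟨a, b, ha, -, hab, rfl⟩ := hw
  convert AffineMap.lineMap_mem_affineSpan_pair (k := ℝ) a⁻¹ q (a • p + b • q) using 1
  obtain rfl : b = 1 - a := by linarith
  rw [AffineMap.lineMap_apply_module]
  match_scalars <;> field_simp; ring

lemma AffineIndependent.of_affineSpan_eq_of_card_eq {S T : Finset E}
    (hS : AffineIndependent ℝ ((↑) : S → E))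
    (hspan : affineSpan ℝ (T : Set E) = affineSpan ℝ (S : Set E)) (hcard : T.card = S.card) :
    AffineIndependent ℝ ((↑) : T → E) := by
  rcases S.eq_empty_or_nonempty with rfl | hne
  · rw [Finset.card_empty, Finset.card_eq_zero] at hcard
    subst hcard
    exact affineIndependent_of_subsingleton ℝ _
  have hSc : Fintype.card S = (S.card - 1) + 1 := by
    rw [Fintype.card_coe]; have := hne.card_pos; omega
  have hTc : Fintype.card T = (S.card - 1) + 1 := by
    rw [Fintype.card_coe, hcard, ← hSc, Fintype.card_coe]
  rw [affineIndependent_iff_finrank_vectorSpan_eq ℝ _ hSc] at hS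
  have hvs :
      vectorSpan ℝ (Set.range ((↑) : T → E)) = vectorSpan ℝ (Set.range ((↑) : S → E)) := by
    rw [Subtype.range_coe, Subtype.range_coe, ← direction_affineSpan, hspan, direction_affineSpan]
  rw [affineIndependent_iff_finrank_vectorSpan_eq ℝ _ hTc, ← hS, hvs]

theorem AffineIndependent.exists_finite_convexHull_eq_iInter [FiniteDimensional ℝ E]
    {u : Finset E} (hu : AffineIndependent ℝ ((↑) : u → E)) :
    ∃ I : Set (E →ᵃ[ℝ] ℝ), I.Finite ∧ convexHull ℝ (u : Set E) = ⋂ f ∈ I, {x | 0 ≤ f x} := by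
  classical
  obtain ⟨T, huT, hT, hTspan⟩ := exists_subset_affineIndependent_affineSpan_eq_top hu
  have : Fintype T := (finite_set_of_fin_dim_affineIndependent ℝ hT).fintype
  let b : AffineBasis T ℝ E := ⟨(↑), hT, by rw [Subtype.range_coe, hTspan]⟩
  -- `u` is the face of the simplex `T` cut out by the vanishing of the coordinates outside `u`
  refine ⟨Set.range b.coord ∪ (fun i => -b.coord i) '' {i | (i : E) ∉ u},
    (Set.finite_range _).union ((Set.toFinite _).image _), Set.Subset.antisymm ?_ fun x hx => ?_⟩
  · refine convexHull_min (fun y hy => Set.mem_iInter₂.2 ?_)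
      (convex_iInter₂ fun f _ => (convex_Ici 0).affine_preimage f)
    have hyT : y ∈ T := Set.mem_of_subset_of_mem huT hy
    rintro _ (⟨i, rfl⟩ | ⟨i, hi, rfl⟩)
    · show 0 ≤ b.coord i (b ⟨y, hyT⟩)
      rw [b.coord_apply]
      split_ifs <;> norm_num
    · have hne : i ≠ ⟨y, hyT⟩ := fun h => hi (by rw [h]; exact hy)
      show 0 ≤ -b.coord i (b ⟨y, hyT⟩)
      rw [b.coord_apply_ne hne, neg_zero]
  · have h₀ : ∀ i, 0 ≤ b.coord i x := fun i => Set.mem_iInter₂.1 hx _ (Or.inl ⟨i, rfl⟩)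
    have h₁ : ∀ i : T, (i : E) ∉ u → b.coord i x = 0 := fun i hi =>
      le_antisymm (neg_nonneg.1 (Set.mem_iInter₂.1 hx _ (Or.inr ⟨i, hi, rfl⟩))) (h₀ i)
    have hx : Finset.univ.centerMass (fun i => b.coord i x) b = x := by
      rw [Finset.centerMass_eq_of_sum_1 _ _ (b.sum_coord_apply_eq_one x)]
      exact b.linear_combination_coord_eq_self x
    rw [← hx, ← Finset.centerMass_filter_ne_zero]
    refine Finset.centerMass_mem_convexHull _ (fun i _ => h₀ i) ?_
      fun i hi => by_contra fun h => (Finset.mem_filter.1 hi).2 (h₁ i h)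
    rw [Finset.sum_filter_ne_zero, b.sum_coord_apply_eq_one]
    exact one_pos

variable [DecidableEq E]

lemma AffineIndependent.insert_erase_of_mem_openSegment {S : Finset E} {p q w : E}
    (hS : AffineIndependent ℝ ((↑) : S → E)) (hp : p ∈ S) (hq : q ∈ S) (hpq : p ≠ q)
    (hw : w ∈ openSegment ℝ p q) (hwS : w ∉ S) :
    AffineIndependent ℝ ((↑) : (insert w (S.erase p) : Finset E) → E) := by
  have hqS : q ∈ S.erase p := Finset.mem_erase.2 ⟨hpq.symm, hq⟩
  refine hS.of_affineSpan_eq_of_card_eq (le_antisymm ?_ ?_) ?_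
  · rw [Finset.coe_insert, affineSpan_le]
    exact Set.insert_subset
      (convexHull_subset_affineSpan _ (mem_convexHull_of_mem_openSegment hp hq hw))
      ((Finset.coe_subset.2 (S.erase_subset p)).trans (subset_affineSpan ℝ _))
  · refine affineSpan_le.2 fun y hy => ?_
    rcases eq_or_ne y p with rfl | hyp
    · exact affineSpan_pair_le_of_mem_of_mem
        (subset_affineSpan ℝ _ (Finset.mem_insert_of_mem hqS))
        (subset_affineSpan ℝ _ (Finset.mem_insert_self w _))
        (mem_affineSpan_pair_of_mem_openSegment hw)
    · exact subset_affineSpan ℝ _ (Finset.mem_insert_of_mem (Finset.mem_erase.2 ⟨hyp, hy⟩))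
  · rw [Finset.card_insert_of_notMem (fun h => hwS (Finset.mem_of_mem_erase h)),
      Finset.card_erase_add_one hp]

lemma convexHull_inter_subset_of_subset {g g' t t' : Finset E}
    (hg : AffineIndependent ℝ ((↑) : g → E)) (hg' : AffineIndependent ℝ ((↑) : g' → E))
    (hgg' : convexHull ℝ ↑g ∩ convexHull ℝ ↑g' ⊆ convexHull ℝ (g ∩ g' : Set E))
    (htg : t ⊆ g) (htg' : t' ⊆ g') :
    convexHull ℝ ↑t ∩ convexHull ℝ ↑t' ⊆ convexHull ℝ (t ∩ t' : Set E) := by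
  rintro x ⟨hxt, hxt'⟩
  have hx : x ∈ convexHull ℝ (↑(g ∩ g') : Set E) := by
    rw [Finset.coe_inter]
    exact hgg' ⟨convexHull_mono htg hxt, convexHull_mono htg' hxt'⟩
  have hx₁ : x ∈ convexHull ℝ (↑(t ∩ (g ∩ g')) : Set E) := by
    rw [Finset.coe_inter, hg.convexHull_inter htg Finset.inter_subset_left]
    exact ⟨hxt, hx⟩
  have hx₂ : x ∈ convexHull ℝ (↑(t ∩ (g ∩ g') ∩ t') : Set E) := by
    rw [Finset.coe_inter,
      hg'.convexHull_inter (Finset.inter_subset_right.trans Finset.inter_subset_right) htg']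
    exact ⟨hx₁, hxt'⟩
  refine convexHull_mono ?_ hx₂
  intro y hy
  simp only [Finset.coe_inter, Set.mem_inter_iff, Finset.mem_coe] at hy ⊢
  exact ⟨hy.1.1, hy.2⟩

lemma convexHull_insert_erase_subset {S : Finset E} {w : E} (hw : w ∈ convexHull ℝ (S : Set E))
    (z : E) :
    convexHull ℝ ((insert w (S.erase z) : Finset E) : Set E) ⊆ convexHull ℝ (S : Set E) :=
  convexHull_min (Finset.coe_insert w _ ▸ Set.insert_subset hw
    ((Finset.coe_subset.2 (S.erase_subset z)).trans (subset_convexHull ℝ _)))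
    (convex_convexHull ℝ _)

lemma AffineIndependent.indicator_add_mul_eq {S s : Finset E} {w : E} {κ g c : E → ℝ}
    (hS : AffineIndependent ℝ ((↑) : S → E)) (hsS : s ⊆ S) (hws : w ∉ s)
    (hκ₁ : ∑ y ∈ S, κ y = 1) (hκ₂ : ∑ y ∈ S, κ y • y = w) (hκS : ∀ y ∉ S, κ y = 0)
    (hcS : ∀ y ∉ S, c y = 0) (h₁ : ∑ y ∈ insert w s, g y = ∑ y ∈ S, c y)
    (h₂ : ∑ y ∈ insert w s, g y • y = ∑ y ∈ S, c y • y) (y : E) :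
    (s : Set E).indicator g y + g w * κ y = c y := by
  by_cases hy : y ∈ S
  · refine hS.eq_of_sum_eq_sum_subtype
      (w₁ := fun y => (s : Set E).indicator g y + g w * κ y) ?_ ?_ y hy
    · have := sum_insert_smul_eq hsS hws (v := fun _ => (1 : ℝ)) (by simpa using hκ₁) g
      simp only [smul_eq_mul, mul_one] at this
      rw [← this, h₁]
    · exact (sum_insert_smul_eq hsS hws (v := id) hκ₂ g).symm.trans h₂
  · rw [Set.indicator_of_notMem (fun h => hy (hsS h)), hκS y hy, hcS y hy]
    ring

lemma mem_convexHull_insert_erase_of_le {S : Finset E} {p q w x z : E} {a b m : ℝ}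
    {g : E → ℝ} (hp : p ∈ S) (hq : q ∈ S) (hpq : p ≠ q) (hab : a + b = 1)
    (hw : a • p + b • q = w) (hwS : w ∉ S) (hg₀ : ∀ y ∈ S, 0 ≤ g y) (hg₁ : ∑ y ∈ S, g y = 1)
    (hg₂ : ∑ y ∈ S, g y • y = x) (hm : 0 ≤ m) (hmp : m * a ≤ g p) (hmq : m * b ≤ g q)
    (hz : z ∈ S) (hgz : g z = m * edgeWeights p q a b z) :
    x ∈ convexHull ℝ ((insert w (S.erase z) : Finset E) : Set E) := by
  set l : E → ℝ := fun y => if y = w then m else g y - m * edgeWeights p q a b y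
  have hlw : l w = m := if_pos rfl
  have hlS : ∀ y ∈ S, l y = g y - m * edgeWeights p q a b y := fun y hy =>
    if_neg (ne_of_mem_of_not_mem hy hwS)
  have hsub := Finset.insert_subset_insert w (S.erase_subset z)
  refine mem_convexHull_of_weights_eq_zero (g := l) hsub (fun y hy => ?_) ?_ ?_ fun y hy hyz => ?_
  · rcases Finset.mem_insert.1 hy with rfl | hy
    · rwa [hlw]
    rw [hlS y (Finset.mem_of_mem_erase hy), sub_nonneg]
    by_cases hyp : y = p
    · rwa [hyp, edgeWeights_left hpq]
    by_cases hyq : y = q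
    · rwa [hyq, edgeWeights_right hpq]
    rw [edgeWeights_of_ne hyp hyq, mul_zero]
    exact hg₀ y (Finset.mem_of_mem_erase hy)
  · rw [Finset.sum_insert hwS, Finset.sum_congr rfl hlS, Finset.sum_sub_distrib, ← Finset.mul_sum,
      sum_edgeWeights hp hq, hab, hg₁, hlw]
    ring
  · rw [Finset.sum_insert hwS, Finset.sum_congr rfl fun y hy => congrArg (· • y) (hlS y hy)]
    simp_rw [sub_smul, Finset.sum_sub_distrib, mul_smul, ← Finset.smul_sum,
      sum_edgeWeights_smul hp hq, hw, hg₂, hlw]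
    abel
  · obtain rfl : y = z := by
      by_contra hne
      rcases Finset.mem_insert.1 hy with rfl | hy
      · exact hyz (Finset.mem_insert_self _ _)
      · exact hyz (Finset.mem_insert_of_mem (Finset.mem_erase.2 ⟨hne, hy⟩))
    rw [hlS y hz, hgz, sub_self]

lemma convexHull_subset_union_insert_erase {S : Finset E} {p q w : E} (hp : p ∈ S) (hq : q ∈ S)
    (hpq : p ≠ q) (hw : w ∈ openSegment ℝ p q) (hwS : w ∉ S) :
    convexHull ℝ (S : Set E) ⊆ convexHull ℝ ((insert w (S.erase p) : Finset E) : Set E) ∪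
      convexHull ℝ ((insert w (S.erase q) : Finset E) : Set E) := by
  obtain ⟨a, b, ha, hb, hab, hw⟩ := hw
  intro x hx
  obtain ⟨g, hg₀, hg₁, hg₂⟩ := Finset.mem_convexHull'.1 hx
  -- move as much weight as possible from `p` and `q` onto `w`
  have hmem := fun z => mem_convexHull_insert_erase_of_le (z := z) hp hq hpq hab hw hwS hg₀ hg₁ hg₂
    (le_min (div_nonneg (hg₀ p hp) ha.le) (div_nonneg (hg₀ q hq) hb.le))
    ((le_div_iff₀ ha).1 (min_le_left _ _)) ((le_div_iff₀ hb).1 (min_le_right _ _))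
  rcases min_choice (g p / a) (g q / b) with h | h
  · refine Or.inl (hmem p hp ?_)
    rw [edgeWeights_left hpq, h, div_mul_cancel₀ _ ha.ne']
  · refine Or.inr (hmem q hq ?_)
    rw [edgeWeights_right hpq, h, div_mul_cancel₀ _ hb.ne']

end ConvexWeights

namespace Geometry.SimplicialComplex

variable {E : Type*} [AddCommGroup E] [Module ℝ E] {M : SimplicialComplex ℝ E}

def IsSubdivision (M' M : SimplicialComplex ℝ E) : Prop :=
  M'.space = M.space ∧ ∀ t' ∈ M'.faces, ∃ t ∈ M.faces, convexHull ℝ (t' : Set E) ⊆ convexHull ℝ ↑t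

lemma IsSubdivision.refl (M : SimplicialComplex ℝ E) : IsSubdivision M M :=
  ⟨rfl, fun t ht => ⟨t, ht, subset_rfl⟩⟩

lemma IsSubdivision.trans {M'' M' : SimplicialComplex ℝ E} (h₁ : IsSubdivision M'' M')
    (h₂ : IsSubdivision M' M) : IsSubdivision M'' M := by
  refine ⟨h₁.1.trans h₂.1, fun t'' ht'' => ?_⟩
  obtain ⟨t', ht', h'⟩ := h₁.2 t'' ht''
  obtain ⟨t, ht, h⟩ := h₂.2 t' ht'
  exact ⟨t, ht, h'.trans h⟩

def RespectsHyperplane (M : SimplicialComplex ℝ E) (f : E →ᵃ[ℝ] ℝ) : Prop :=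
  ∀ t ∈ M.faces, convexHull ℝ ↑t ⊆ {x | f x ≤ 0} ∨ convexHull ℝ ↑t ⊆ {x | 0 ≤ f x}

lemma RespectsHyperplane.of_isSubdivision {M' : SimplicialComplex ℝ E} {f : E →ᵃ[ℝ] ℝ}
    (hM : RespectsHyperplane M f) (h : IsSubdivision M' M) : RespectsHyperplane M' f := by
  intro t' ht'
  obtain ⟨t, ht, hsub⟩ := h.2 t' ht'
  exact (hM t ht).imp hsub.trans hsub.trans

lemma iInter_eq_biUnion_faces {I : Set (E →ᵃ[ℝ] ℝ)} (hIM : ⋂ f ∈ I, {x | 0 ≤ f x} ⊆ M.space)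
    (hM : ∀ f ∈ I, RespectsHyperplane M f) :
    ⋂ f ∈ I, {x | 0 ≤ f x} = ⋃ t ∈ {t ∈ M.faces | convexHull ℝ ↑t ⊆ ⋂ f ∈ I, {x | 0 ≤ f x}},
      convexHull ℝ (t : Set E) := by
  refine Set.Subset.antisymm (fun x hx => ?_) (Set.iUnion₂_subset fun t ht => ht.2)
  obtain ⟨t, ht, hxt⟩ := M.mem_space_iff.1 (hIM hx)
  obtain ⟨t', ht't, g, hg₀, hg₁, hg₂⟩ := exists_pos_weights_of_mem_convexHull hxt
  have ht' : t' ∈ M.faces :=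
    M.down_closed ht ht't (Finset.nonempty_of_sum_ne_zero (hg₁ ▸ one_ne_zero))
  refine Set.mem_biUnion ⟨ht', convexHull_min (fun y hy => ?_) ?_⟩
    (Finset.mem_convexHull'.2 ⟨g, fun y hy => (hg₀ y hy).le, hg₁, hg₂⟩)
  · exact Set.mem_iInter₂.2 fun f hf => apply_nonneg_of_pos_weights hg₀ hg₁ (hM f hf t' ht')
      (hg₂ ▸ Set.mem_iInter₂.1 hx f hf) hy
  · exact convex_iInter₂ fun f _ => (convex_Ici 0).affine_preimage f

section Stellar

variable [DecidableEq E] {p q w : E}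

def ofGenerators (G : Set (Finset E)) (hG : ∀ g ∈ G, AffineIndependent ℝ ((↑) : g → E))
    (hGG : ∀ g ∈ G, ∀ g' ∈ G,
      convexHull ℝ ↑g ∩ convexHull ℝ ↑g' ⊆ convexHull ℝ (g ∩ g' : Set E)) :
    SimplicialComplex ℝ E :=
  SimplicialComplex.ofErase {t | ∃ g ∈ G, t ⊆ g}
    (fun _ ⟨g, hg, htg⟩ => (hG g hg).mono (Finset.coe_subset.2 htg))
    (fun _ _ hts ⟨g, hg, htg⟩ => ⟨g, hg, hts.trans htg⟩)
    (fun _ ⟨g, hg, htg⟩ _ ⟨g', hg', htg'⟩ =>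
      convexHull_inter_subset_of_subset (hG g hg) (hG g' hg') (hGG g hg g' hg') htg htg')

section ofGenerators

variable {G : Set (Finset E)} {hG : ∀ g ∈ G, AffineIndependent ℝ ((↑) : g → E)}
  {hGG : ∀ g ∈ G, ∀ g' ∈ G,
    convexHull ℝ ↑g ∩ convexHull ℝ ↑g' ⊆ convexHull ℝ (g ∩ g' : Set E)}

lemma space_ofGenerators : (ofGenerators G hG hGG).space = ⋃ g ∈ G, convexHull ℝ (g : Set E) := by
  refine Set.Subset.antisymm (Set.iUnion₂_subset fun t ht => ?_) (Set.iUnion₂_subset fun g hg => ?_)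
  · obtain ⟨g, hg, htg⟩ := ht.1
    exact (convexHull_mono htg).trans
      (Set.subset_biUnion_of_mem (u := fun g : Finset E => convexHull ℝ (g : Set E)) hg)
  · rcases g.eq_empty_or_nonempty with rfl | hne
    · simp
    · exact SimplicialComplex.convexHull_subset_space ⟨⟨g, hg, subset_rfl⟩, hne.ne_empty⟩

lemma finite_faces_ofGenerators (hfin : G.Finite) : (ofGenerators G hG hGG).faces.Finite :=
  (hfin.biUnion fun g _ => (g.powerset : Set (Finset E)).toFinite).subset
    fun t ht => by
      obtain ⟨g, hg, htg⟩ := ht.1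
      exact Set.mem_biUnion hg (by simpa using htg)

end ofGenerators

lemma notMem_of_mem_openSegment (hpq : p ≠ q) (he : {p, q} ∈ M.faces)
    (hw : w ∈ openSegment ℝ p q) {S : Finset E} (hS : S ∈ M.faces) : w ∉ S := by
  intro hwS
  have hw' : w ∈ convexHull ℝ (({p, q} : Finset E) : Set E) :=
    mem_convexHull_of_mem_openSegment (by simp) (by simp) hw
  rw [vertex_mem_convexHull_iff (M.down_closed hS (Finset.singleton_subset_iff.2 hwS)
    (Finset.singleton_nonempty w)) he] at hw'
  rcases Finset.mem_insert.1 hw' with rfl | hw'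
  · exact hpq (left_mem_openSegment_iff.1 hw)
  · rw [Finset.mem_singleton.1 hw', openSegment_symm] at hw
    exact hpq (left_mem_openSegment_iff.1 hw).symm

/-- Generators of the stellar subdivision of `M` at a point `w` of the edge `{p, q}`: each face
`S ⊇ {p, q}` is replaced by the two cones from `w` over `S.erase p` and `S.erase q`. -/
def stellarGenerators (M : SimplicialComplex ℝ E) (p q w : E) : Set (Finset E) :=
  {t ∈ M.faces | ¬{p, q} ⊆ t} ∪
    {t | ∃ S ∈ M.faces, {p, q} ⊆ S ∧ ∃ z ∈ ({p, q} : Finset E), t = insert w (S.erase z)}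

lemma affineIndependent_of_mem_stellarGenerators (hpq : p ≠ q) (hw : w ∈ openSegment ℝ p q)
    (hwM : ∀ S ∈ M.faces, w ∉ S) {g : Finset E} (hg : g ∈ stellarGenerators M p q w) :
    AffineIndependent ℝ ((↑) : g → E) := by
  rcases hg with ⟨hg, -⟩ | ⟨S, hS, hpqS, z, hz, rfl⟩
  · exact M.indep hg
  have hp : p ∈ S := hpqS (by simp)
  have hq : q ∈ S := hpqS (by simp)
  simp only [Finset.mem_insert, Finset.mem_singleton] at hz
  rcases hz with rfl | rfl
  · exact (M.indep hS).insert_erase_of_mem_openSegment hp hq hpq hw (hwM S hS)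
  · rw [openSegment_symm] at hw
    exact (M.indep hS).insert_erase_of_mem_openSegment hq hp hpq.symm hw (hwM S hS)

lemma indicator_add_mul_edgeWeights_eq {a b : ℝ} {S D : Finset E} (hS : S ∈ M.faces)
    (hpqS : {p, q} ⊆ S) (hab : a + b = 1) (hw : a • p + b • q = w) (hwS : w ∉ S) (z : E)
    (hDS : D ⊆ S) {x : E} {l c : E → ℝ} (hl₁ : ∑ y ∈ insert w (S.erase z), l y = 1)
    (hl₂ : ∑ y ∈ insert w (S.erase z), l y • y = x) (hcD : ∀ y ∉ D, c y = 0)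
    (hc₁ : ∑ y ∈ D, c y = 1) (hc₂ : ∑ y ∈ D, c y • y = x) (y : E) :
    ((S.erase z : Finset E) : Set E).indicator l y + l w * edgeWeights p q a b y = c y := by
  have hp : p ∈ S := hpqS (by simp)
  have hq : q ∈ S := hpqS (by simp)
  refine (M.indep hS).indicator_add_mul_eq (S.erase_subset z)
    (fun h => hwS (Finset.mem_of_mem_erase h)) (by rw [sum_edgeWeights hp hq, hab])
    (by simpa [hw] using sum_edgeWeights_smul (a := a) (b := b) hp hq id)
    (fun y hy => edgeWeights_of_ne (ne_of_mem_of_not_mem hp hy).symm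
      (ne_of_mem_of_not_mem hq hy).symm) (fun y hy => hcD y fun h => hy (hDS h)) ?_ ?_ y
  · rw [hl₁, ← Finset.sum_subset hDS fun y _ hy => hcD y hy, hc₁]
  · rw [hl₂, ← Finset.sum_subset hDS fun y _ hy => by rw [hcD y hy, zero_smul], hc₂]

lemma inter_subset_of_old_of_new (hw : w ∈ openSegment ℝ p q) (hwM : ∀ S ∈ M.faces, w ∉ S)
    {t S : Finset E} (ht : t ∈ M.faces) (hpqt : ¬{p, q} ⊆ t) (hS : S ∈ M.faces)
    (hpqS : {p, q} ⊆ S) (z : E) :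
    convexHull ℝ ↑t ∩ convexHull ℝ ↑(insert w (S.erase z)) ⊆
      convexHull ℝ ((t : Set E) ∩ ↑(insert w (S.erase z))) := by
  have hp : p ∈ S := hpqS (by simp)
  have hq : q ∈ S := hpqS (by simp)
  have hwS : w ∉ S := hwM S hS
  obtain ⟨a, b, ha, hb, hab, hw'⟩ := id hw
  rintro x ⟨hxt, hxg⟩
  have hxtS : x ∈ convexHull ℝ (↑(t ∩ S) : Set E) := by
    rw [Finset.coe_inter]
    exact M.inter_subset_convexHull ht hS
      ⟨hxt, convexHull_insert_erase_subset (mem_convexHull_of_mem_openSegment hp hq hw) z hxg⟩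
  obtain ⟨c, -, hc, hc₁, hc₂⟩ := exists_weights_of_mem_convexHull hxtS
  obtain ⟨l, hl₀, -, hl₁, hl₂⟩ := exists_weights_of_mem_convexHull hxg
  have hcoord := indicator_add_mul_edgeWeights_eq hS hpqS hab hw' hwS z Finset.inter_subset_right
    hl₁ hl₂ hc hc₁ hc₂
  obtain ⟨z', hz', hz't⟩ : ∃ z' ∈ ({p, q} : Finset E), z' ∉ t := Finset.not_subset.1 hpqt
  have hlw : l w = 0 := by
    have h := hcoord z'
    rw [hc z' fun h => hz't (Finset.mem_inter.1 h).1] at h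
    have := edgeWeights_pos ha hb hz'
    have := Set.indicator_nonneg (fun y _ => hl₀ y) z' (s := ((S.erase z : Finset E) : Set E))
    nlinarith [hl₀ w]
  rw [← Finset.coe_inter]
  refine mem_convexHull_of_weights_eq_zero Finset.inter_subset_right (fun y _ => hl₀ y) hl₁ hl₂
    fun y hy hyt => ?_
  rcases Finset.mem_insert.1 hy with rfl | hy'
  · exact hlw
  · have h := hcoord y
    rwa [Set.indicator_of_mem (Finset.mem_coe.2 hy'), hlw, zero_mul, add_zero,
      hc y fun h => hyt (Finset.mem_inter.2 ⟨(Finset.mem_inter.1 h).1, hy⟩)] at h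

lemma inter_subset_of_new_of_new (hw : w ∈ openSegment ℝ p q) (hwM : ∀ S ∈ M.faces, w ∉ S)
    {S₁ S₂ : Finset E} (hS₁ : S₁ ∈ M.faces) (hpqS₁ : {p, q} ⊆ S₁) (hS₂ : S₂ ∈ M.faces)
    (hpqS₂ : {p, q} ⊆ S₂) {z₁ z₂ : E} (hz₁ : z₁ ∈ ({p, q} : Finset E))
    (hz₂ : z₂ ∈ ({p, q} : Finset E)) :
    convexHull ℝ ↑(insert w (S₁.erase z₁)) ∩ convexHull ℝ ↑(insert w (S₂.erase z₂)) ⊆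
      convexHull ℝ (↑(insert w (S₁.erase z₁)) ∩ ↑(insert w (S₂.erase z₂)) : Set E) := by
  obtain ⟨a, b, ha, hb, hab, hw'⟩ := id hw
  rintro x ⟨hx₁, hx₂⟩
  have hxS : x ∈ convexHull ℝ (↑(S₁ ∩ S₂) : Set E) := by
    rw [Finset.coe_inter]
    exact M.inter_subset_convexHull hS₁ hS₂
      ⟨convexHull_insert_erase_subset
        (mem_convexHull_of_mem_openSegment (hpqS₁ (by simp)) (hpqS₁ (by simp)) hw) z₁ hx₁,
      convexHull_insert_erase_subset
        (mem_convexHull_of_mem_openSegment (hpqS₂ (by simp)) (hpqS₂ (by simp)) hw) z₂ hx₂⟩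
  obtain ⟨c, -, hc, hc₁, hc₂⟩ := exists_weights_of_mem_convexHull hxS
  obtain ⟨l₁, hl₁₀, -, hl₁₁, hl₁₂⟩ := exists_weights_of_mem_convexHull hx₁
  obtain ⟨l₂, hl₂₀, -, hl₂₁, hl₂₂⟩ := exists_weights_of_mem_convexHull hx₂
  have hcoord₁ := indicator_add_mul_edgeWeights_eq hS₁ hpqS₁ hab hw' (hwM S₁ hS₁) z₁
    Finset.inter_subset_left hl₁₁ hl₁₂ hc hc₁ hc₂
  have hcoord₂ := indicator_add_mul_edgeWeights_eq hS₂ hpqS₂ hab hw' (hwM S₂ hS₂) z₂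
    Finset.inter_subset_right hl₂₁ hl₂₂ hc hc₁ hc₂
  -- both cones assign to `w` the largest weight that can be taken off `p` and `q`
  have hlw : l₁ w = l₂ w := by
    have h₁ := hcoord₁ z₂
    have h₂ := hcoord₂ z₂
    have h₃ := hcoord₁ z₁
    have h₄ := hcoord₂ z₁
    rw [Set.indicator_of_notMem (Finset.notMem_erase z₂ S₂)] at h₂
    rw [Set.indicator_of_notMem (Finset.notMem_erase z₁ S₁)] at h₃
    have := Set.indicator_nonneg (fun y _ => hl₁₀ y) z₂ (s := ((S₁.erase z₁ : Finset E) : Set E))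
    have := Set.indicator_nonneg (fun y _ => hl₂₀ y) z₁ (s := ((S₂.erase z₂ : Finset E) : Set E))
    refine le_antisymm (le_of_mul_le_mul_right ?_ (edgeWeights_pos ha hb hz₂))
      (le_of_mul_le_mul_right ?_ (edgeWeights_pos ha hb hz₁)) <;> linarith
  rw [← Finset.coe_inter]
  refine mem_convexHull_of_weights_eq_zero Finset.inter_subset_left (fun y _ => hl₁₀ y) hl₁₁ hl₁₂
    fun y hy hy₁₂ => ?_
  have hy₂ : y ∉ insert w (S₂.erase z₂) := fun h => hy₁₂ (Finset.mem_inter.2 ⟨hy, h⟩)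
  have hy₁ : y ∈ S₁.erase z₁ :=
    (Finset.mem_insert.1 hy).resolve_left fun h => hy₂ (h ▸ Finset.mem_insert_self _ _)
  have h₁ := hcoord₁ y
  have h₂ := hcoord₂ y
  rw [Set.indicator_of_mem (Finset.mem_coe.2 hy₁), hlw] at h₁
  rw [Set.indicator_of_notMem fun h => hy₂ (Finset.mem_insert_of_mem h)] at h₂
  linarith

lemma inter_subset_of_mem_stellarGenerators (hw : w ∈ openSegment ℝ p q)
    (hwM : ∀ S ∈ M.faces, w ∉ S) {g g' : Finset E} (hg : g ∈ stellarGenerators M p q w)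
    (hg' : g' ∈ stellarGenerators M p q w) :
    convexHull ℝ ↑g ∩ convexHull ℝ ↑g' ⊆ convexHull ℝ (g ∩ g' : Set E) := by
  rcases hg with ⟨hg, hpqg⟩ | ⟨S, hS, hpqS, z, hz, rfl⟩ <;>
    rcases hg' with ⟨hg', hpqg'⟩ | ⟨S', hS', hpqS', z', hz', rfl⟩
  · exact M.inter_subset_convexHull hg hg'
  · exact inter_subset_of_old_of_new hw hwM hg hpqg hS' hpqS' z'
  · rw [Set.inter_comm, Set.inter_comm _ (g' : Set E)]
    exact inter_subset_of_old_of_new hw hwM hg' hpqg' hS hpqS z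
  · exact inter_subset_of_new_of_new hw hwM hS hpqS hS' hpqS' hz hz'

def stellarSubdivision (M : SimplicialComplex ℝ E) (hpq : p ≠ q) (he : {p, q} ∈ M.faces)
    (hw : w ∈ openSegment ℝ p q) : SimplicialComplex ℝ E :=
  ofGenerators (stellarGenerators M p q w)
    (fun _ => affineIndependent_of_mem_stellarGenerators hpq hw
      fun _ => notMem_of_mem_openSegment hpq he hw)
    (fun _ hg _ hg' => inter_subset_of_mem_stellarGenerators hw
      (fun _ => notMem_of_mem_openSegment hpq he hw) hg hg')

variable (hpq : p ≠ q) (he : {p, q} ∈ M.faces) (hw : w ∈ openSegment ℝ p q)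

lemma isSubdivision_stellarSubdivision : IsSubdivision (stellarSubdivision M hpq he hw) M := by
  have hwM : ∀ S ∈ M.faces, w ∉ S := fun _ => notMem_of_mem_openSegment hpq he hw
  have hcone : ∀ S ∈ M.faces, {p, q} ⊆ S → ∀ z,
      convexHull ℝ ↑(insert w (S.erase z)) ⊆ convexHull ℝ (S : Set E) := fun S _ hpqS =>
    convexHull_insert_erase_subset
      (mem_convexHull_of_mem_openSegment (hpqS (by simp)) (hpqS (by simp)) hw)
  refine ⟨?_, fun t' ht' => ?_⟩
  · rw [stellarSubdivision, space_ofGenerators]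
    refine Set.Subset.antisymm (Set.iUnion₂_subset fun g hg => ?_)
      (Set.iUnion₂_subset fun t ht => ?_)
    · rcases hg with ⟨hg, -⟩ | ⟨S, hS, hpqS, z, -, rfl⟩
      · exact convexHull_subset_space hg
      · exact (hcone S hS hpqS z).trans (convexHull_subset_space hS)
    have hsub : ∀ g ∈ stellarGenerators M p q w,
        convexHull ℝ (g : Set E) ⊆ ⋃ g ∈ stellarGenerators M p q w, convexHull ℝ (g : Set E) :=
      fun g hg => Set.subset_biUnion_of_mem (u := fun g : Finset E => convexHull ℝ (g : Set E)) hg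
    by_cases hpqt : {p, q} ⊆ t
    · refine (convexHull_subset_union_insert_erase (hpqt (by simp)) (hpqt (by simp)) hpq hw
        (hwM t ht)).trans (Set.union_subset ?_ ?_) <;>
      exact hsub _ (Or.inr ⟨t, ht, hpqt, _, by simp, rfl⟩)
    · exact hsub t (Or.inl ⟨ht, hpqt⟩)
  · obtain ⟨g, hg, htg⟩ := ht'.1
    rcases hg with ⟨hg, -⟩ | ⟨S, hS, hpqS, z, -, rfl⟩
    · exact ⟨g, hg, convexHull_mono htg⟩
    · exact ⟨S, hS, (convexHull_mono htg).trans (hcone S hS hpqS z)⟩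

lemma finite_faces_stellarSubdivision (hM : M.faces.Finite) :
    (stellarSubdivision M hpq he hw).faces.Finite := by
  refine finite_faces_ofGenerators ((hM.subset fun t ht => ht.1).union
    ((hM.image2 (fun S z => insert w (S.erase z)) (Set.toFinite {p, q})).subset ?_))
  rintro _ ⟨S, hS, -, z, hz, rfl⟩
  exact ⟨S, hS, z, by simpa using hz, rfl⟩

end Stellar

def crossingPairs (M : SimplicialComplex ℝ E) (f : E →ᵃ[ℝ] ℝ) : Set (E × E) :=
  {z | ∃ t ∈ M.faces, z.1 ∈ t ∧ z.2 ∈ t ∧ f z.1 < 0 ∧ 0 < f z.2}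

section crossingPairs

variable {f : E →ᵃ[ℝ] ℝ}

lemma finite_crossingPairs (hM : M.faces.Finite) : (crossingPairs M f).Finite := by
  have hV : (⋃ t ∈ M.faces, (t : Set E)).Finite := hM.biUnion fun t _ => t.finite_toSet
  refine (hV.prod hV).subset ?_
  rintro ⟨y₁, y₂⟩ ⟨t, ht, h₁, h₂, -, -⟩
  exact ⟨Set.mem_biUnion ht h₁, Set.mem_biUnion ht h₂⟩

lemma respectsHyperplane_of_crossingPairs_eq_empty (h : crossingPairs M f = ∅) :
    RespectsHyperplane M f := by
  intro t ht
  have hside : (∀ y ∈ t, f y ≤ 0) ∨ ∀ y ∈ t, 0 ≤ f y := by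
    by_contra! hcross
    obtain ⟨⟨y₂, hy₂, h₂⟩, y₁, hy₁, h₁⟩ := hcross
    exact (Set.eq_empty_iff_forall_notMem.1 h) (y₁, y₂) ⟨t, ht, hy₁, hy₂, h₁, h₂⟩
  exact hside.imp (fun h => convexHull_min h ((convex_Iic 0).affine_preimage f))
    (fun h => convexHull_min h ((convex_Ici 0).affine_preimage f))

lemma crossingPairs_stellarSubdivision_subset [DecidableEq E] {p q w : E} (hpq : p ≠ q)
    (he : {p, q} ∈ M.faces) (hw : w ∈ openSegment ℝ p q) (hfw : f w = 0) :
    crossingPairs (stellarSubdivision M hpq he hw) f ⊆ crossingPairs M f \ {(p, q)} := by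
  rintro ⟨y₁, y₂⟩ ⟨t', ht', hy₁, hy₂, h₁, h₂⟩
  have hy₁w : y₁ ≠ w := by rintro rfl; linarith
  have hy₂w : y₂ ≠ w := by rintro rfl; linarith
  have hcross : ∀ g ∈ M.faces, ∀ g₀ ⊆ g, y₁ ∈ g₀ → y₂ ∈ g₀ → ¬{p, q} ⊆ g₀ →
      (y₁, y₂) ∈ crossingPairs M f \ {(p, q)} := by
    rintro g hg g₀ hg₀ hy₁g hy₂g hpqg
    refine ⟨⟨g, hg, hg₀ hy₁g, hg₀ hy₂g, h₁, h₂⟩, fun heq => hpqg ?_⟩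
    obtain ⟨rfl, rfl⟩ := Prod.mk.inj (Set.mem_singleton_iff.1 heq)
    exact Finset.insert_subset hy₁g (Finset.singleton_subset_iff.2 hy₂g)
  obtain ⟨g, hg, htg⟩ := ht'.1
  rcases hg with ⟨hg, hpqg⟩ | ⟨S, hS, -, z, hz, rfl⟩
  · exact hcross g hg g subset_rfl (htg hy₁) (htg hy₂) hpqg
  · exact hcross S hS _ (S.erase_subset z) ((Finset.mem_insert.1 (htg hy₁)).resolve_left hy₁w)
      ((Finset.mem_insert.1 (htg hy₂)).resolve_left hy₂w)
      fun h => Finset.notMem_erase z S (h hz)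

lemma exists_subdivision_crossingPairs_ssubset (hM : M.faces.Finite) {p q : E}
    (hpq : (p, q) ∈ crossingPairs M f) :
    ∃ M' : SimplicialComplex ℝ E, M'.faces.Finite ∧ IsSubdivision M' M ∧
      crossingPairs M' f ⊂ crossingPairs M f := by
  classical
  obtain ⟨t, ht, hp, hq, hfp, hfq⟩ := hpq
  have hne : p ≠ q := by rintro rfl; linarith
  have he : {p, q} ∈ M.faces :=
    M.down_closed ht (Finset.insert_subset hp (Finset.singleton_subset_iff.2 hq)) (by simp)
  have hd : 0 < f q - f p := by linarith
  set w := (f q / (f q - f p)) • p + (-f p / (f q - f p)) • q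
  have hab : f q / (f q - f p) + -f p / (f q - f p) = 1 := by field_simp; ring
  have hw : w ∈ openSegment ℝ p q :=
    ⟨_, _, div_pos hfq hd, div_pos (by linarith) hd, hab, rfl⟩
  have hfw : f w = 0 := by
    rw [Convex.combo_affine_apply hab, smul_eq_mul, smul_eq_mul]
    field_simp
    ring
  have hsub := crossingPairs_stellarSubdivision_subset hne he hw hfw
  refine ⟨stellarSubdivision M hne he hw, finite_faces_stellarSubdivision hne he hw hM,
    isSubdivision_stellarSubdivision hne he hw, (Set.ssubset_iff_of_subset
      (hsub.trans Set.sdiff_subset)).2 ⟨(p, q), ⟨t, ht, hp, hq, hfp, hfq⟩, fun h => (hsub h).2 rfl⟩⟩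

end crossingPairs

lemma exists_subdivision_respectsHyperplane (f : E →ᵃ[ℝ] ℝ) (hM : M.faces.Finite) :
    ∃ M' : SimplicialComplex ℝ E, M'.faces.Finite ∧ IsSubdivision M' M ∧
      RespectsHyperplane M' f := by
  induction hn : (crossingPairs M f).ncard using Nat.strong_induction_on generalizing M with
  | _ n ih =>
  rcases (crossingPairs M f).eq_empty_or_nonempty with h | ⟨⟨p, q⟩, hpq⟩
  · exact ⟨M, hM, IsSubdivision.refl M, respectsHyperplane_of_crossingPairs_eq_empty h⟩
  · obtain ⟨M₁, hM₁, hM₁M, hlt⟩ := exists_subdivision_crossingPairs_ssubset hM hpq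
    obtain ⟨M₂, hM₂, hM₂M₁, hresp⟩ :=
      ih _ (hn ▸ Set.ncard_lt_ncard hlt (finite_crossingPairs hM)) hM₁ rfl
    exact ⟨M₂, hM₂, hM₂M₁.trans hM₁M, hresp⟩

lemma exists_subdivision_respectsHyperplanes {H : Set (E →ᵃ[ℝ] ℝ)} (hH : H.Finite)
    (hM : M.faces.Finite) :
    ∃ M' : SimplicialComplex ℝ E, M'.faces.Finite ∧ IsSubdivision M' M ∧
      ∀ f ∈ H, RespectsHyperplane M' f := by
  induction H, hH using Set.Finite.induction_on generalizing M with
  | empty => exact ⟨M, hM, IsSubdivision.refl M, by simp⟩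
  | @insert f H _ _ ih =>
    obtain ⟨M₁, hM₁, hM₁M, h₁⟩ := exists_subdivision_respectsHyperplane f hM
    obtain ⟨M₂, hM₂, hM₂M₁, h₂⟩ := ih hM₁
    refine ⟨M₂, hM₂, hM₂M₁.trans hM₁M, ?_⟩
    rintro g (rfl | hg)
    · exact h₁.of_isSubdivision hM₂M₁
    · exact h₂ g hg

end Geometry.SimplicialComplex

/-- **Common refinement of geometric triangulations**: if two finite geometric simplicial
complexes `K` and `L` in `ℝⁿ` have the same underlying space `S`, then there is a finite
geometric simplicial complex `M` with underlying space `S` such that the convex hull of every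
face of `K`, and of every face of `L`, is a union of convex hulls of faces of `M`. -/
theorem triangulations_common_refinement (n : ℕ)
    (K L : Geometry.SimplicialComplex ℝ (Fin n → ℝ))
    (hK : K.faces.Finite) (hL : L.faces.Finite) (S : Set (Fin n → ℝ))
    (hKS : K.space = S) (hLS : L.space = S) :
    ∃ M : Geometry.SimplicialComplex ℝ (Fin n → ℝ), M.faces.Finite ∧ M.space = S ∧
      (∀ s ∈ K.faces, ∃ T ⊆ M.faces,
        convexHull ℝ (s : Set (Fin n → ℝ)) = ⋃ t ∈ T, convexHull ℝ (t : Set (Fin n → ℝ))) ∧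
      (∀ s ∈ L.faces, ∃ T ⊆ M.faces,
        convexHull ℝ (s : Set (Fin n → ℝ)) = ⋃ t ∈ T, convexHull ℝ (t : Set (Fin n → ℝ))) := by
  have hindep : ∀ s ∈ K.faces ∪ L.faces, AffineIndependent ℝ ((↑) : s → Fin n → ℝ) :=
    fun s hs => hs.elim K.indep L.indep
  have hspace : ∀ s ∈ K.faces ∪ L.faces, convexHull ℝ (s : Set (Fin n → ℝ)) ⊆ S := fun s hs =>
    hs.elim (fun h => hKS ▸ SimplicialComplex.convexHull_subset_space h)
      (fun h => hLS ▸ SimplicialComplex.convexHull_subset_space h)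
  choose I hIfin hI using fun s hs => (hindep s hs).exists_finite_convexHull_eq_iInter
  obtain ⟨M, hMfin, hMK, hMI⟩ := SimplicialComplex.exists_subdivision_respectsHyperplanes
    ((hK.union hL).biUnion' hIfin) hK
  have hMS : M.space = S := hMK.1.trans hKS
  have hcover : ∀ s ∈ K.faces ∪ L.faces, ∃ T ⊆ M.faces,
      convexHull ℝ (s : Set (Fin n → ℝ)) = ⋃ t ∈ T, convexHull ℝ (t : Set (Fin n → ℝ)) := by
    intro s hs
    refine ⟨{t ∈ M.faces | convexHull ℝ (t : Set (Fin n → ℝ)) ⊆ convexHull ℝ ↑s},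
      fun t ht => ht.1, ?_⟩
    rw [hI s hs]
    exact SimplicialComplex.iInter_eq_biUnion_faces (hI s hs ▸ hMS ▸ hspace s hs)
      fun f hf => hMI f (Set.mem_iUnion₂.2 ⟨s, hs, hf⟩)
  exact ⟨M, hMfin, hMS, fun s hs => hcover s (Or.inl hs), fun s hs => hcover s (Or.inr hs)⟩
end

section
/- Suspension respects composition: for linear subspaces U ⊆ V of W and any subset P ⊆ S(W) ∩ U, one has Susp_V(Susp_U(P) ∩ V) = Susp_U(P); that is, suspending P from U into V and then suspending the result from V into W agrees exactly with suspending P from U into W. -/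
open scoped RealInnerProductSpace

variable {W : Type*} [NormedAddCommGroup W] [InnerProductSpace ℝ W] [FiniteDimensional ℝ W]

/-- The suspension of a subset `P` of the unit sphere `S(W)` from a linear subspace `V ⊆ W`:
the set of unit vectors `x` such that the orthogonal projection `P_V x` of `x` to `V` is zero,
or is nonzero and normalizes to a point of `P`. -/
noncomputable def susp (V : Submodule ℝ W) (P : Set W) : Set W :=
  {x : W | ‖x‖ = 1 ∧
    (((Submodule.orthogonalProjectionOnto V x : W) = 0) ∨
      ((Submodule.orthogonalProjectionOnto V x : W) ≠ 0 ∧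
        ‖(Submodule.orthogonalProjectionOnto V x : W)‖⁻¹ • (Submodule.orthogonalProjectionOnto V x : W) ∈ P))}

/-! Writing `Susp_V(Q) = {x : ‖x‖ = 1, normalize (P_V x) ∈ {0} ∪ Q}` makes the membership
condition depend only on the direction of the projection. Since `P_U ∘ P_V = P_U` for `U ≤ V`, and
normalizing `P_V x` only rescales `P_U x` by the positive factor `‖P_V x‖⁻¹`, both sides impose the
same condition on `x`. -/

open Set NormedSpace

theorem normalize_mem_insert_zero_iff {E : Type*} [NormedAddCommGroup E] [NormedSpace ℝ E]
    {P : Set E} {y : E} : normalize y ∈ insert 0 P ↔ y = 0 ∨ (y ≠ 0 ∧ normalize y ∈ P) := by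
  by_cases hy : y = 0
  · simp [hy]
  · simp [hy, normalize_eq_zero_iff]

theorem mem_susp_iff {V : Submodule ℝ W} {P : Set W} {x : W} :
    x ∈ susp V P ↔ ‖x‖ = 1 ∧ normalize (V.starProjection x) ∈ insert 0 P := by
  rw [normalize_mem_insert_zero_iff]
  rfl

theorem normalize_mem_insert_zero_susp_iff (U : Submodule ℝ W) (P : Set W) (y : W) :
    normalize y ∈ insert 0 (susp U P) ↔ normalize (U.starProjection y) ∈ insert 0 P := by
  rcases eq_or_ne y 0 with rfl | hy
  · simp [normalize_zero_eq_zero]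
  have hn : normalize y ≠ 0 := (normalize_eq_zero_iff y).not.mpr hy
  have hproj : U.starProjection (normalize y) = ‖y‖⁻¹ • U.starProjection y := map_smul _ _ _
  rw [mem_insert_iff, or_iff_right hn, mem_susp_iff, and_iff_right (norm_normalize_eq_one_iff.mpr hy),
    hproj, normalize_smul_of_pos (inv_pos.mpr (norm_pos_iff.mpr hy))]

theorem susp_susp_general (U V : Submodule ℝ W) (hUV : U ≤ V) (P : Set W) :
    susp V (susp U P ∩ (V : Set W)) = susp U P := by
  ext x
  have hdir_mem : normalize (V.starProjection x) ∈ (V : Set W) :=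
    V.smul_mem _ (V.starProjection_apply_mem x)
  have hUV_proj : U.starProjection (V.starProjection x) = U.starProjection x := by
    simpa using congr($(Submodule.starProjection_comp_starProjection_of_le hUV) x)
  rw [mem_susp_iff, mem_susp_iff, mem_insert_iff, mem_inter_iff, and_iff_left hdir_mem, ← mem_insert_iff,
    normalize_mem_insert_zero_susp_iff, hUV_proj]

/-- **Suspension respects composition**: for linear subspaces `U ⊆ V` of `W` and a subset
`P ⊆ S(W) ∩ U`, suspending `P` from `U` into `V` and then suspending the result from `V`
into `W` agrees with suspending `P` from `U` into `W`. -/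
theorem susp_susp (U V : Submodule ℝ W) (hUV : U ≤ V) (P : Set W)
    (hP : P ⊆ {x : W | ‖x‖ = 1} ∩ (U : Set W)) :
    susp V (susp U P ∩ (V : Set W)) = susp U P :=
  susp_susp_general U V hUV P
end

section
/- Every subset Q ⊆ S(W) is a suspension from a unique minimal subspace: there exists a unique linear subspace U₀ ⊆ W such that Q is a suspension from U₀ and U₀ ⊆ V for every linear subspace V ⊆ W from which Q is a suspension. (In particular Q is a suspension from every subspace containing U₀.) -/
/-!
Let `C` be the cone on `Q` (the rays through `Q`, together with `0`). For unit-sphere sets, `Q` is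
a suspension from `V` exactly when `C` is invariant under translation by `Vᗮ`. The translations
preserving `C` form a linear subspace `T` (they form an additive group, and positive scaling
preserves `C`), so `Q` is a suspension from `V` iff `Vᗮ ≤ T`,
i.e. iff `Tᗮ ≤ V`; hence `Tᗮ` is the minimal subspace.
-/

variable {W : Type*} [NormedAddCommGroup W] [InnerProductSpace ℝ W] [FiniteDimensional ℝ W]

/-- `Q ⊆ S(W)` is a suspension from the linear subspace `V` if `Q = Susp_V(Q ∩ V)`. -/
def IsSuspensionFrom (Q : Set W) (V : Submodule ℝ W) : Prop :=
  Q = susp V (Q ∩ (V : Set W))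

section Cone

variable {E : Type*} [NormedAddCommGroup E] [NormedSpace ℝ E]

def cone (Q : Set E) : Set E :=
  {x | x = 0 ∨ ‖x‖⁻¹ • x ∈ Q}

lemma smul_mem_cone_iff {Q : Set E} {c : ℝ} (hc : 0 < c) {x : E} :
    c • x ∈ cone Q ↔ x ∈ cone Q := by
  have hnorm : ‖c • x‖⁻¹ • c • x = ‖x‖⁻¹ • x := by
    rw [norm_smul, Real.norm_of_nonneg hc.le, mul_inv, smul_smul, mul_comm c⁻¹, mul_assoc,
      inv_mul_cancel₀ hc.ne', mul_one]
  simp only [cone, Set.mem_ofPred_eq, smul_eq_zero, hc.ne', false_or, hnorm]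

lemma mem_cone_iff_of_norm_eq_one {Q : Set E} {x : E} (hx : ‖x‖ = 1) :
    x ∈ cone Q ↔ x ∈ Q := by
  have hx0 : x ≠ 0 := by rintro rfl; simp at hx
  simp [cone, hx0, hx]

lemma add_smul_mem_cone_iff {Q : Set E} {w : E} (hw : ∀ x, x + w ∈ cone Q ↔ x ∈ cone Q)
    {c : ℝ} (hc : 0 < c) (x : E) : x + c • w ∈ cone Q ↔ x ∈ cone Q := by
  have hx : x + c • w = c • (c⁻¹ • x + w) := by
    rw [smul_add, smul_smul, mul_inv_cancel₀ hc.ne', one_smul]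
  rw [hx, smul_mem_cone_iff hc, hw, smul_mem_cone_iff (inv_pos.2 hc)]

def invariantDirections (Q : Set E) : Submodule ℝ E where
  carrier := {w | ∀ x, x + w ∈ cone Q ↔ x ∈ cone Q}
  zero_mem' := by simp
  add_mem' {a b} ha hb x := by
    rw [← add_assoc, hb (x + a), ha x]
  smul_mem' c w hw := by
    have hneg : ∀ x, x + -w ∈ cone Q ↔ x ∈ cone Q := fun x => by
      simpa using (hw (x + -w)).symm
    rcases lt_trichotomy c 0 with hc | rfl | hc
    · intro x
      simpa [neg_smul_neg] using add_smul_mem_cone_iff hneg (neg_pos.2 hc) x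
    · simp
    · exact add_smul_mem_cone_iff hw hc

end Cone

lemma mem_susp_inter_iff {Q : Set W} {V : Submodule ℝ W} {x : W} (hx : ‖x‖ = 1) :
    x ∈ susp V (Q ∩ V) ↔ V.starProjection x ∈ cone Q := by
  have hV : ‖V.starProjection x‖⁻¹ • V.starProjection x ∈ V :=
    V.smul_mem _ (V.starProjection_apply_mem x)
  by_cases h0 : V.starProjection x = 0 <;> simp [susp, cone, hx, h0, hV]

lemma isSuspensionFrom_iff_forall_mem_cone_iff {Q : Set W} (hQ : Q ⊆ {x : W | ‖x‖ = 1})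
    {V : Submodule ℝ W} :
    IsSuspensionFrom Q V ↔ ∀ x, x ∈ cone Q ↔ V.starProjection x ∈ cone Q := by
  constructor
  · intro hQV x
    rcases eq_or_ne x 0 with rfl | hx0
    · simp [cone]
    have hc : 0 < ‖x‖⁻¹ := inv_pos.2 (norm_pos_iff.2 hx0)
    have hu : ‖‖x‖⁻¹ • x‖ = 1 := norm_smul_inv_norm hx0
    calc x ∈ cone Q ↔ ‖x‖⁻¹ • x ∈ Q := by
          rw [← smul_mem_cone_iff hc, mem_cone_iff_of_norm_eq_one hu]
      _ ↔ ‖x‖⁻¹ • x ∈ susp V (Q ∩ V) := by rw [← hQV]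
      _ ↔ V.starProjection x ∈ cone Q := by
          rw [mem_susp_inter_iff hu, map_smul, smul_mem_cone_iff hc]
  · intro h
    ext x
    by_cases hx : ‖x‖ = 1
    · rw [mem_susp_inter_iff hx, ← h, mem_cone_iff_of_norm_eq_one hx]
    · exact iff_of_false (fun hxQ => hx (hQ hxQ)) (fun hxs => hx hxs.1)

lemma isSuspensionFrom_iff_orthogonal_le {Q : Set W} (hQ : Q ⊆ {x : W | ‖x‖ = 1})
    {V : Submodule ℝ W} : IsSuspensionFrom Q V ↔ Vᗮ ≤ invariantDirections Q := by
  rw [isSuspensionFrom_iff_forall_mem_cone_iff hQ]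
  constructor
  · intro h w hw x
    rw [h, h x, map_add, V.starProjection_apply_eq_zero_iff.2 hw, add_zero]
  · intro h x
    have hx := h (V.sub_starProjection_mem_orthogonal x) (V.starProjection x)
    rwa [add_sub_cancel] at hx

lemma isSuspensionFrom_iff_le {Q : Set W} (hQ : Q ⊆ {x : W | ‖x‖ = 1}) {V : Submodule ℝ W} :
    IsSuspensionFrom Q V ↔ (invariantDirections Q)ᗮ ≤ V := by
  rw [isSuspensionFrom_iff_orthogonal_le hQ, Submodule.orthogonal_le_iff_orthogonal_le]

/-- **Unique minimal subspace of suspension**: every subset `Q` of the unit sphere `S(W)` is a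
suspension from a unique linear subspace `U₀` that is contained in every subspace from which
`Q` is a suspension; moreover `Q` is a suspension from every subspace containing `U₀`. -/
theorem exists_unique_minimal_suspension (Q : Set W) (hQ : Q ⊆ {x : W | ‖x‖ = 1}) :
    (∃! U₀ : Submodule ℝ W, IsSuspensionFrom Q U₀ ∧
        ∀ V : Submodule ℝ W, IsSuspensionFrom Q V → U₀ ≤ V) ∧
      ∀ U₀ V : Submodule ℝ W,
        (IsSuspensionFrom Q U₀ ∧ ∀ V' : Submodule ℝ W, IsSuspensionFrom Q V' → U₀ ≤ V') →
        U₀ ≤ V → IsSuspensionFrom Q V := by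
  have key (V : Submodule ℝ W) : IsSuspensionFrom Q V ↔ (invariantDirections Q)ᗮ ≤ V :=
    isSuspensionFrom_iff_le hQ
  refine ⟨⟨_, ⟨(key _).2 le_rfl, fun V => (key V).1⟩, fun U hU => ?_⟩,
    fun U V hU hUV => (key V).2 (((key U).1 hU.1).trans hUV)⟩
  exact le_antisymm (hU.2 _ ((key _).2 le_rfl)) ((key U).1 hU.1)
end

section
/- The one-dimensional polytope group is the augmentation ideal of the group ring of ℝ: the assignment ⟨a,b⟩ ↦ [b] − [a] induces a well-defined isomorphism of abelian groups from Pt(E¹) onto the augmentation ideal ker(ε : ℤ[ℝ] → ℤ), and this isomorphism is ℝ-equivariant for the translation actions (t·⟨a,b⟩ = ⟨a+t, b+t⟩ on Pt(E¹) and t·[x] = [x+t] on ℤ[ℝ]). -/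
noncomputable section

/-- Generators of `Pt(E¹)`: pairs `(a,b)` of reals with `a < b`, representing the
interval `[a,b]`. -/
def IntervalGen : Type := {p : ℝ × ℝ // p.1 < p.2}

/-- The subgroup of relations: `⟨a,b⟩ − ⟨a,c⟩ − ⟨c,b⟩` for all `a < c < b`. -/
def ptRel : AddSubgroup (FreeAbelianGroup IntervalGen) :=
  AddSubgroup.closure
    {x | ∃ (a b c : ℝ) (hab : a < b) (hac : a < c) (hcb : c < b),
      x = FreeAbelianGroup.of (⟨(a, b), hab⟩ : IntervalGen)
        - FreeAbelianGroup.of (⟨(a, c), hac⟩ : IntervalGen)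
        - FreeAbelianGroup.of (⟨(c, b), hcb⟩ : IntervalGen)}

/-- The polytope (Steinberg) group `Pt(E¹)` of the Euclidean line: the free abelian group
on the generators `⟨a,b⟩` (for `a < b`) modulo the cutting relations. -/
def PtE1 : Type := FreeAbelianGroup IntervalGen ⧸ ptRel

instance : AddCommGroup PtE1 := QuotientAddGroup.Quotient.addCommGroup ptRel

/-- The class of the generator `⟨a,b⟩` in `Pt(E¹)`. -/
def PtE1.gen (a b : ℝ) (h : a < b) : PtE1 :=
  QuotientAddGroup.mk (FreeAbelianGroup.of (⟨(a, b), h⟩ : IntervalGen))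

/-- Translation of a generating interval by `t`. -/
def shiftGen (t : ℝ) (p : IntervalGen) : IntervalGen :=
  ⟨(p.1.1 + t, p.1.2 + t), add_lt_add_of_lt_of_le p.2 le_rfl⟩

lemma shift_rel_le (t : ℝ) :
    ptRel ≤ ptRel.comap (FreeAbelianGroup.map (shiftGen t)) := by
  rw [ptRel, AddSubgroup.closure_le]
  rintro x ⟨a, b, c, hab, hac, hcb, rfl⟩
  show FreeAbelianGroup.map (shiftGen t)
    (FreeAbelianGroup.of (α := IntervalGen) ⟨(a, b), hab⟩
      - FreeAbelianGroup.of (α := IntervalGen) ⟨(a, c), hac⟩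
      - FreeAbelianGroup.of (α := IntervalGen) ⟨(c, b), hcb⟩) ∈ ptRel
  rw [map_sub, map_sub]
  erw [FreeAbelianGroup.map_of_apply, FreeAbelianGroup.map_of_apply,
    FreeAbelianGroup.map_of_apply]
  exact AddSubgroup.subset_closure
    ⟨a + t, b + t, c + t, add_lt_add_of_lt_of_le hab le_rfl, add_lt_add_of_lt_of_le hac le_rfl,
      add_lt_add_of_lt_of_le hcb le_rfl, rfl⟩

/-- The translation action of `t ∈ ℝ = T(1)` on `Pt(E¹)`, sending `⟨a,b⟩` to
`⟨a+t, b+t⟩`. -/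
def PtE1.shift (t : ℝ) : PtE1 →+ PtE1 :=
  QuotientAddGroup.map ptRel ptRel (FreeAbelianGroup.map (shiftGen t)) (shift_rel_le t)

/-- The augmentation homomorphism `ε : ℤ[ℝ] → ℤ` sending each basis element `[x]` to `1`. -/
def aug : AddMonoidAlgebra ℤ ℝ →+ ℤ :=
  (Finsupp.liftAddHom fun _ : ℝ => AddMonoidHom.id ℤ).comp
    AddMonoidAlgebra.coeffAddEquiv.toAddMonoidHom

/-!
The assignment `⟨a,b⟩ ↦ [b] − [a]` is additive under cutting and lands in the augmentation
ideal. An inverse sends `[x]` to the oriented interval from `0` to `x` (`-⟨x,0⟩` when `x < 0`):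
the cutting relation gives `⟨0,a⟩ + ⟨a,b⟩ = ⟨0,b⟩` wherever `0` lies, so this is a left inverse,
and the other composite is `y ↦ y − ε(y)[0]`, the identity on `ker ε`.
-/

open AddMonoidAlgebra

lemma aug_single (x : ℝ) (n : ℤ) : aug (single x n) = n :=
  Finsupp.liftAddHom_apply_single (fun _ : ℝ => AddMonoidHom.id ℤ) x n

namespace PtE1

variable {A : Type*} [AddCommGroup A]

@[ext]
lemma hom_ext {f g : PtE1 →+ A}
    (h : ∀ a b (hab : a < b), f (gen a b hab) = g (gen a b hab)) : f = g :=
  QuotientAddGroup.addMonoidHom_ext _ <|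
    FreeAbelianGroup.lift_ext _ _ fun p => h p.1.1 p.1.2 p.2

lemma gen_add_gen {a b c : ℝ} (hab : a < b) (hbc : b < c) :
    gen a b hab + gen b c hbc = gen a c (hab.trans hbc) := by
  have hrel : (QuotientAddGroup.mk (FreeAbelianGroup.of (⟨(a, c), hab.trans hbc⟩ : IntervalGen)
      - FreeAbelianGroup.of ⟨(a, b), hab⟩ - FreeAbelianGroup.of ⟨(b, c), hbc⟩) : PtE1) = 0 :=
    (QuotientAddGroup.eq_zero_iff _).2 <|
      AddSubgroup.subset_closure ⟨a, c, b, hab.trans hbc, hab, hbc, rfl⟩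
  change gen a c _ - gen a b hab - gen b c hbc = 0 at hrel
  rw [sub_sub, sub_eq_zero] at hrel
  exact hrel.symm

def lift (f : ℝ → ℝ → A)
    (hf : ∀ a b c, a < b → b < c → f a b + f b c = f a c) : PtE1 →+ A :=
  QuotientAddGroup.lift ptRel (FreeAbelianGroup.lift fun p => f p.1.1 p.1.2) <| by
    rw [ptRel, AddSubgroup.closure_le]
    rintro _ ⟨a, b, c, hab, hac, hcb, rfl⟩
    erw [SetLike.mem_coe, AddMonoidHom.mem_ker, map_sub, map_sub, FreeAbelianGroup.lift_apply_of,
      FreeAbelianGroup.lift_apply_of, FreeAbelianGroup.lift_apply_of, ← hf a c b hac hcb]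
    abel

@[simp]
lemma lift_gen (f : ℝ → ℝ → A)
    (hf : ∀ a b c, a < b → b < c → f a b + f b c = f a c) (a b : ℝ) (hab : a < b) :
    lift f hf (gen a b hab) = f a b :=
  FreeAbelianGroup.lift_apply_of _ _

@[simp]
lemma shift_gen (t a b : ℝ) (hab : a < b) :
    shift t (gen a b hab) = gen (a + t) (b + t) (add_lt_add_left hab t) := by
  show QuotientAddGroup.mk (FreeAbelianGroup.map (shiftGen t) (FreeAbelianGroup.of _)) = _
  erw [FreeAbelianGroup.map_of_apply]
  rfl

def orientedGen (a b : ℝ) : PtE1 :=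
  if h : a < b then gen a b h else if h' : b < a then -gen b a h' else 0

lemma orientedGen_of_lt {a b : ℝ} (h : a < b) : orientedGen a b = gen a b h := by
  simp [orientedGen, h]

lemma orientedGen_of_gt {a b : ℝ} (h : b < a) : orientedGen a b = -gen b a h := by
  simp [orientedGen, h, h.not_gt]

@[simp]
lemma orientedGen_self (a : ℝ) : orientedGen a a = 0 := by
  simp [orientedGen]

lemma orientedGen_add_gen (o : ℝ) {a b : ℝ} (hab : a < b) :
    orientedGen o a + gen a b hab = orientedGen o b := by
  rcases lt_trichotomy o a with hoa | rfl | hao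
  · rw [orientedGen_of_lt hoa, orientedGen_of_lt (hoa.trans hab), gen_add_gen]
  · rw [orientedGen_self, zero_add, orientedGen_of_lt hab]
  rcases lt_trichotomy o b with hob | rfl | hbo
  · rw [orientedGen_of_gt hao, orientedGen_of_lt hob, ← gen_add_gen hao hob]
    abel
  · rw [orientedGen_of_gt hao, orientedGen_self, neg_add_cancel]
  · rw [orientedGen_of_gt hao, orientedGen_of_gt hbo, ← gen_add_gen hab hbo]
    abel

def toGroupRing : PtE1 →+ AddMonoidAlgebra ℤ ℝ :=
  lift (fun a b => single b 1 - single a 1) fun _ _ _ _ _ => by abel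

@[simp]
lemma toGroupRing_gen (a b : ℝ) (hab : a < b) :
    toGroupRing (gen a b hab) = single b 1 - single a 1 :=
  lift_gen _ _ a b hab

lemma toGroupRing_orientedGen (a b : ℝ) :
    toGroupRing (orientedGen a b) = single b 1 - single a 1 := by
  rcases lt_trichotomy a b with h | rfl | h
  · rw [orientedGen_of_lt h, toGroupRing_gen]
  · rw [orientedGen_self, map_zero, sub_self]
  · rw [orientedGen_of_gt h, map_neg, toGroupRing_gen, neg_sub]

lemma aug_toGroupRing (x : PtE1) : aug (toGroupRing x) = 0 := by
  have : aug.comp toGroupRing = 0 := by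
    ext a b hab
    simp [aug_single]
  exact DFunLike.congr_fun this x

lemma toGroupRing_shift (t : ℝ) (x : PtE1) :
    toGroupRing (shift t x) = single t 1 * toGroupRing x := by
  have : toGroupRing.comp (shift t) = (AddMonoidHom.mulLeft (single t 1)).comp toGroupRing := by
    ext a b hab
    simp [mul_sub, single_mul_single, add_comm t]
  exact DFunLike.congr_fun this x

def ofGroupRing : AddMonoidAlgebra ℤ ℝ →+ PtE1 :=
  (Finsupp.liftAddHom fun x => zmultiplesHom PtE1 (orientedGen 0 x)).comp
    coeffAddEquiv.toAddMonoidHom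

lemma ofGroupRing_single (x : ℝ) (n : ℤ) : ofGroupRing (single x n) = n • orientedGen 0 x :=
  Finsupp.liftAddHom_apply_single (fun x => zmultiplesHom PtE1 (orientedGen 0 x)) x n

lemma ofGroupRing_toGroupRing (x : PtE1) : ofGroupRing (toGroupRing x) = x := by
  have : ofGroupRing.comp toGroupRing = AddMonoidHom.id PtE1 := by
    ext a b hab
    simp [ofGroupRing_single, ← orientedGen_add_gen 0 hab]
  exact DFunLike.congr_fun this x

lemma toGroupRing_ofGroupRing (y : AddMonoidAlgebra ℤ ℝ) :
    toGroupRing (ofGroupRing y) = y - aug y • single 0 1 := by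
  have : toGroupRing.comp ofGroupRing
      = AddMonoidHom.id _ - (zmultiplesHom _ (single 0 1)).comp aug := by
    ext x
    simp [ofGroupRing_single, toGroupRing_orientedGen, aug_single]
  exact DFunLike.congr_fun this y

def augEquiv : PtE1 ≃+ aug.ker where
  toFun x := ⟨toGroupRing x, AddMonoidHom.mem_ker.mpr (aug_toGroupRing x)⟩
  invFun y := ofGroupRing y
  left_inv := ofGroupRing_toGroupRing
  right_inv y := Subtype.ext <| by
    change toGroupRing (ofGroupRing y) = y
    rw [toGroupRing_ofGroupRing, AddMonoidHom.mem_ker.mp y.2, zero_smul, sub_zero]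
  map_add' x y := Subtype.ext <| map_add toGroupRing x y

end PtE1

/-- **`Pt(E¹)` is the augmentation ideal of `ℤ[ℝ]`**: the assignment
`⟨a,b⟩ ↦ [b] − [a]` induces a well-defined isomorphism of abelian groups from `Pt(E¹)` onto
`ker(ε : ℤ[ℝ] → ℤ)`, and this isomorphism is `ℝ`-equivariant for the translation actions
(`t·⟨a,b⟩ = ⟨a+t,b+t⟩` on `Pt(E¹)`, and `t·[x] = [x+t]`, i.e. multiplication by the basis
element `[t]`, on `ℤ[ℝ]`). -/
theorem ptE1_addEquiv_augmentationIdeal :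
    ∃ e : PtE1 ≃+ aug.ker,
      (∀ (a b : ℝ) (h : a < b),
        (e (PtE1.gen a b h) : AddMonoidAlgebra ℤ ℝ)
          = AddMonoidAlgebra.single b 1 - AddMonoidAlgebra.single a 1) ∧
      (∀ (t : ℝ) (x : PtE1),
        (e (PtE1.shift t x) : AddMonoidAlgebra ℤ ℝ)
          = AddMonoidAlgebra.single t 1 * (e x : AddMonoidAlgebra ℤ ℝ)) :=
  ⟨PtE1.augEquiv, PtE1.toGroupRing_gen, PtE1.toGroupRing_shift⟩
end
end
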